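/- arXiv:2102.10359 — 8 statements merged into one kernel-verified Lean document; each statement's English description precedes it below -/
import Mathlib

section
/- Let ω : ℝ → ℝ be continuous with ω ∈ FE over [t_r, t_e], meaning ∫_{t_r}^{t_e} ω(τ)² dτ ≥ α > 0, and let σ > 0. Define Ω(t) = ∫_{t_r}^t e^{−σ(τ−t_r)} ω(τ)² dτ. Then: (1) Ω is nondecreasing and Ω(t) ≥ 0 for all t ≥ t_r; (2) if ω is bounded by ω_max, then Ω(t) ≤ ω_max²/σ for all t ≥ t_r; (3) for all t ≥ t_e, Ω(t) ≥ e^{−σ(t_e−t_r)}·α > 0. -/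
open MeasureTheory

/-- Properties of the integral filter with exponential forgetting and resetting
`Ω(t) = ∫_{t_r}^t e^{-σ(τ-t_r)} ω(τ)² dτ` driven by a finitely exciting `ω`:
it is nondecreasing and nonnegative on `[t_r, ∞)`, bounded above by `ω_max²/σ`,
and bounded below by `e^{-σ(t_e-t_r)} α > 0` after the excitation interval. -/
theorem resetting_filter_bounds (ω : ℝ → ℝ) (tr te σ α ωmax : ℝ)
    (hc : Continuous ω) (hσ : 0 < σ) (hα : 0 < α) (hrte : tr ≤ te)
    (hFE : α ≤ ∫ τ in tr..te, (ω τ) ^ 2) :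
    letI Ω : ℝ → ℝ := fun t => ∫ τ in tr..t, Real.exp (-σ * (τ - tr)) * (ω τ) ^ 2
    (MonotoneOn Ω (Set.Ici tr) ∧ ∀ t ≥ tr, 0 ≤ Ω t) ∧
    ((∀ t, |ω t| ≤ ωmax) → ∀ t ≥ tr, Ω t ≤ ωmax ^ 2 / σ) ∧
    (∀ t ≥ te, Real.exp (-σ * (te - tr)) * α ≤ Ω t ∧ 0 < Real.exp (-σ * (te - tr)) * α) := by
  set Ω : ℝ → ℝ := fun t => ∫ τ in tr..t, Real.exp (-σ * (τ - tr)) * (ω τ) ^ 2 with hΩ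
  set f : ℝ → ℝ := fun τ => Real.exp (-σ * (τ - tr)) * (ω τ) ^ 2 with hfdef
  have hf : Continuous f := by
    apply Continuous.mul
    · exact Real.continuous_exp.comp (by continuity)
    · exact hc.pow 2
  have hint : ∀ a b : ℝ, IntervalIntegrable f volume a b := fun a b =>
    hf.intervalIntegrable a b
  have hnn : ∀ τ, 0 ≤ f τ := fun τ => mul_nonneg (Real.exp_pos _).le (sq_nonneg _)
  have hmono : MonotoneOn Ω (Set.Ici tr) := by
    intro s _ t _ hst
    have hadd := intervalIntegral.integral_add_adjacent_intervals (hint tr s) (hint s t)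
    have h2 : 0 ≤ ∫ τ in s..t, f τ :=
      intervalIntegral.integral_nonneg hst (fun x _ => hnn x)
    show Ω s ≤ Ω t
    simp only [Ω]
    linarith [hadd]
  have hnonneg : ∀ t ≥ tr, 0 ≤ Ω t := by
    intro t ht
    exact intervalIntegral.integral_nonneg ht (fun x _ => hnn x)
  refine ⟨⟨hmono, hnonneg⟩, ?_, ?_⟩
  · -- upper bound
    intro hb t ht
    have hωmax : 0 ≤ ωmax := le_trans (abs_nonneg _) (hb 0)
    -- antiderivative
    have hderiv : ∀ τ : ℝ, HasDerivAt (fun τ => -(Real.exp (-σ * (τ - tr))) / σ)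
        (Real.exp (-σ * (τ - tr))) τ := by
      intro τ
      have h1 : HasDerivAt (fun τ : ℝ => -σ * (τ - tr)) (-σ) τ := by
        simpa using (((hasDerivAt_id τ).sub_const tr).const_mul (-σ))
      have h2 : HasDerivAt (fun τ => Real.exp (-σ * (τ - tr))) (Real.exp (-σ * (τ - tr)) * (-σ)) τ :=
        (Real.hasDerivAt_exp _).comp τ h1
      have h3 := (h2.neg).div_const σ
      convert h3 using 1
      case e'_9 => rw [mul_neg, neg_neg, mul_div_assoc, div_self hσ.ne', mul_one]
      all_goals rfl
    have hkey : ∫ τ in tr..t, Real.exp (-σ * (τ - tr)) =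
        -(Real.exp (-σ * (t - tr))) / σ - (-(Real.exp (-σ * (tr - tr))) / σ) := by
      apply intervalIntegral.integral_eq_sub_of_hasDerivAt
      · intro x _; exact hderiv x
      · exact (Real.continuous_exp.comp (by continuity)).intervalIntegrable tr t
    have hle : Ω t ≤ ∫ τ in tr..t, Real.exp (-σ * (τ - tr)) * ωmax ^ 2 := by
      apply intervalIntegral.integral_mono_on ht (hint tr t)
      · exact ((Real.continuous_exp.comp (by continuity)).mul continuous_const).intervalIntegrable tr t
      · intro x _
        apply mul_le_mul_of_nonneg_left _ (Real.exp_pos _).le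
        calc (ω x) ^ 2 = |ω x| ^ 2 := (sq_abs _).symm
          _ ≤ ωmax ^ 2 := pow_le_pow_left₀ (abs_nonneg _) (hb x) 2
    have hint2 : ∫ τ in tr..t, Real.exp (-σ * (τ - tr)) * ωmax ^ 2 =
        (∫ τ in tr..t, Real.exp (-σ * (τ - tr))) * ωmax ^ 2 :=
      intervalIntegral.integral_mul_const _ _
    have hexp_le : ∫ τ in tr..t, Real.exp (-σ * (τ - tr)) ≤ 1 / σ := by
      rw [hkey]
      simp only [sub_self, mul_zero, Real.exp_zero]
      have : 0 < Real.exp (-σ * (t - tr)) := Real.exp_pos _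
      rw [div_sub_div_same, div_le_div_iff₀ hσ hσ]; nlinarith
    calc Ω t ≤ (∫ τ in tr..t, Real.exp (-σ * (τ - tr))) * ωmax ^ 2 := by rw [← hint2]; exact hle
      _ ≤ (1 / σ) * ωmax ^ 2 := by
          apply mul_le_mul_of_nonneg_right hexp_le (sq_nonneg _)
      _ = ωmax ^ 2 / σ := by ring
  · -- lower bound
    intro t ht
    have hpos : 0 < Real.exp (-σ * (te - tr)) * α := mul_pos (Real.exp_pos _) hα
    refine ⟨?_, hpos⟩
    have hte : Ω te ≤ Ω t := hmono (Set.mem_Ici.2 hrte) (Set.mem_Ici.2 (le_trans hrte ht)) ht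
    have hlow : Real.exp (-σ * (te - tr)) * ∫ τ in tr..te, (ω τ) ^ 2 ≤ Ω te := by
      rw [← intervalIntegral.integral_const_mul]
      apply intervalIntegral.integral_mono_on hrte
      · exact (continuous_const.mul (hc.pow 2)).intervalIntegrable tr te
      · exact hint tr te
      · intro x hx
        apply mul_le_mul_of_nonneg_right _ (sq_nonneg _)
        apply Real.exp_le_exp.2
        nlinarith [hx.1, hx.2]
    have h1 : Real.exp (-σ * (te - tr)) * α ≤
        Real.exp (-σ * (te - tr)) * ∫ τ in tr..te, (ω τ) ^ 2 :=
      mul_le_mul_of_nonneg_left hFE (Real.exp_pos _).le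
    linarith
end

section
/- Let Γ₂ : ℝ → ℝ solve Γ₂'(t) = λ₁Γ₂(t) − λ₂Γ₂(t)²Ω(t)², Γ₂(t₀) = Γ₂₀ > 0, where λ₁, λ₂ > 0 and Ω : ℝ → ℝ is continuous with 0 < Ω_LB ≤ Ω(t) ≤ Ω_UB for all t ≥ t₀. Then Γ₂(t) > 0 for all t ≥ t₀ and Γ₂ is uniformly bounded: there exist constants Γ₂min, Γ₂max > 0 (depending only on Γ₂₀, λ₁, λ₂, Ω_LB, Ω_UB) with Γ₂min ≤ Γ₂(t) ≤ Γ₂max. -/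
open Topology

lemma barrier (f : ℝ → ℝ) (t0 m : ℝ)
    (hc : ∀ t ≥ t0, ContinuousAt f t)
    (hm : m < f t0)
    (hd : ∀ t ≥ t0, f t = m → ∃ d, HasDerivAt f d t ∧ 0 < d) :
    ∀ t ≥ t0, m < f t := by
  intro T hT
  by_contra h
  push_neg at h
  set A := Set.Icc t0 T ∩ f ⁻¹' Set.Iic m with hA
  have hA_ne : A.Nonempty := ⟨T, ⟨⟨hT, le_refl T⟩, h⟩⟩
  have hA_bdd : BddBelow A := ⟨t0, fun t ht => ht.1.1⟩
  have hcon : ContinuousOn f (Set.Icc t0 T) := fun t ht => (hc t ht.1).continuousWithinAt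
  have hA_closed : IsClosed A :=
    hcon.preimage_isClosed_of_isClosed isClosed_Icc isClosed_Iic
  set t1 := sInf A with ht1def
  have ht1A : t1 ∈ A := hA_closed.csInf_mem hA_ne hA_bdd
  have ht1ge : t0 ≤ t1 := ht1A.1.1
  have ht1gt : t0 < t1 := by
    rcases eq_or_lt_of_le ht1ge with heq | h'
    · exfalso; have : f t0 ≤ m := heq ▸ ht1A.2; linarith
    · exact h'
  have hleft : ∀ t, t0 ≤ t → t < t1 → m < f t := by
    intro t ht0 htl
    by_contra hft
    push_neg at hft
    have : t ∈ A := ⟨⟨ht0, le_trans htl.le ht1A.1.2⟩, hft⟩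
    exact absurd (csInf_le hA_bdd this) (not_le.2 htl)
  have hft1 : f t1 = m := by
    refine le_antisymm ht1A.2 ?_
    by_contra hlt
    push_neg at hlt
    have hcont := (hc t1 ht1ge).tendsto
    have hev : ∀ᶠ t in 𝓝[<] t1, f t < m :=
      (hcont.mono_left nhdsWithin_le_nhds).eventually_lt_const hlt
    have hev2 : Set.Ioo t0 t1 ∈ 𝓝[<] t1 := Ioo_mem_nhdsLT_of_mem ⟨ht1gt, le_refl _⟩
    obtain ⟨t, htlt, ht0', htl⟩ := (hev.and (Filter.eventually_of_mem hev2 (fun _ h => h))).exists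
    exact absurd htlt (not_lt.2 (hleft t ht0'.le htl).le)
  obtain ⟨d, hdAt, hdpos⟩ := hd t1 ht1ge hft1
  have hs : Filter.Tendsto (slope f t1) (𝓝[<] t1) (𝓝 d) :=
    (hasDerivAt_iff_tendsto_slope.mp hdAt).mono_left
      (nhdsWithin_mono _ (fun x hx => ne_of_lt hx))
  have hev : ∀ᶠ t in 𝓝[<] t1, slope f t1 t ≤ 0 := by
    filter_upwards [Ioo_mem_nhdsLT_of_mem ⟨ht1gt, le_refl _⟩] with t ht
    have h1 : m < f t := hleft t ht.1.le ht.2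
    have h2 : t - t1 < 0 := by linarith [ht.2]
    have : 0 ≤ f t - f t1 := by rw [hft1]; linarith
    rw [slope_def_field]
    exact div_nonpos_of_nonneg_of_nonpos this h2.le
  have : d ≤ 0 := le_of_tendsto hs hev
  linarith


/-- The time-varying adaptive gain `Γ₂` solving the scalar Riccati-type ODE
`Γ₂' = λ₁Γ₂ - λ₂Γ₂²Ω²`, `Γ₂(t₀) = Γ₂₀ > 0`, with `0 < Ω_LB ≤ Ω(t) ≤ Ω_UB`,
stays positive and is uniformly bounded from below and above by positive constants. -/
theorem adaptive_gain_bounded (Γ : ℝ → ℝ) (Ω : ℝ → ℝ) (t0 Γ0 lam1 lam2 ΩLB ΩUB : ℝ)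
    (hΩc : Continuous Ω) (hl1 : 0 < lam1) (hl2 : 0 < lam2)
    (hLB : 0 < ΩLB) (hΩ : ∀ t ≥ t0, ΩLB ≤ Ω t ∧ Ω t ≤ ΩUB)
    (hinit : Γ t0 = Γ0) (hΓ0 : 0 < Γ0)
    (hode : ∀ t ≥ t0, HasDerivAt Γ (lam1 * Γ t - lam2 * (Γ t) ^ 2 * (Ω t) ^ 2) t) :
    (∀ t ≥ t0, 0 < Γ t) ∧
    ∃ Γmin Γmax : ℝ, 0 < Γmin ∧ 0 < Γmax ∧ ∀ t ≥ t0, Γmin ≤ Γ t ∧ Γ t ≤ Γmax := by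
  have hUB : 0 < ΩUB := lt_of_lt_of_le hLB (le_trans (hΩ t0 le_rfl).1 (hΩ t0 le_rfl).2)
  set m := min Γ0 (lam1 / (lam2 * ΩUB ^ 2)) / 2 with hmdef
  set M := max Γ0 (lam1 / (lam2 * ΩLB ^ 2)) + 1 with hMdef
  have hq : 0 < lam1 / (lam2 * ΩUB ^ 2) := div_pos hl1 (by positivity)
  have hm_pos : 0 < m := by
    have := lt_min hΓ0 hq
    rw [hmdef]; linarith
  have hm_lt : m < lam1 / (lam2 * ΩUB ^ 2) := by
    have h2 : min Γ0 (lam1 / (lam2 * ΩUB ^ 2)) ≤ lam1 / (lam2 * ΩUB ^ 2) := min_le_right _ _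
    have h3 : 0 < min Γ0 (lam1 / (lam2 * ΩUB ^ 2)) := lt_min hΓ0 hq
    rw [hmdef]; linarith
  have hm_lt' : lam2 * m * ΩUB ^ 2 < lam1 := by
    have h := (lt_div_iff₀ (show (0:ℝ) < lam2 * ΩUB ^ 2 by positivity)).mp hm_lt
    nlinarith [h]
  have hM_pos : 0 < M := by
    have := le_max_left Γ0 (lam1 / (lam2 * ΩLB ^ 2)); rw [hMdef]; linarith
  have hM_gt : lam1 < lam2 * M * ΩLB ^ 2 := by
    have h1 : lam1 / (lam2 * ΩLB ^ 2) < M := by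
      have := le_max_right Γ0 (lam1 / (lam2 * ΩLB ^ 2)); rw [hMdef]; linarith
    have h2 : (0:ℝ) < lam2 * ΩLB ^ 2 := by positivity
    nlinarith [(div_lt_iff₀ h2).mp h1]
  have hΓ0M : Γ0 < M := by
    have := le_max_left Γ0 (lam1 / (lam2 * ΩLB ^ 2)); rw [hMdef]; linarith
  -- lower bound
  have hlow : ∀ t ≥ t0, m < Γ t := by
    refine barrier Γ t0 m (fun t ht => (hode t ht).continuousAt) ?_ ?_
    · rw [hinit, hmdef]
      have := min_le_left Γ0 (lam1 / (lam2 * ΩUB ^ 2))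
      have := lt_min hΓ0 hq
      linarith
    · intro t ht hΓt
      refine ⟨lam1 * Γ t - lam2 * (Γ t) ^ 2 * (Ω t) ^ 2, hode t ht, ?_⟩
      rw [hΓt]
      obtain ⟨h1, h2⟩ := hΩ t ht
      have hΩ0 : 0 ≤ Ω t := le_trans hLB.le h1
      have hsq : (Ω t) ^ 2 ≤ ΩUB ^ 2 := by nlinarith
      nlinarith [mul_le_mul_of_nonneg_left hsq (by positivity : (0:ℝ) ≤ lam2 * m ^ 2),
        mul_lt_mul_of_pos_left hm_lt' hm_pos]
  -- upper bound
  have hhigh : ∀ t ≥ t0, Γ t < M := by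
    have hb := barrier (fun s => -Γ s) t0 (-M)
      (fun t ht => ((hode t ht).continuousAt).neg)
      (by show -M < -Γ t0; rw [hinit]; linarith)
      (by
        intro t ht hΓt
        have hΓt' : Γ t = M := by
          have h : -Γ t = -M := hΓt
          linarith
        refine ⟨-(lam1 * Γ t - lam2 * (Γ t) ^ 2 * (Ω t) ^ 2), (hode t ht).neg, ?_⟩
        rw [hΓt']
        obtain ⟨h1, h2⟩ := hΩ t ht
        have hsq : ΩLB ^ 2 ≤ (Ω t) ^ 2 := by nlinarith
        nlinarith [mul_le_mul_of_nonneg_left hsq (by positivity : (0:ℝ) ≤ lam2 * M ^ 2),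
          mul_lt_mul_of_pos_left hM_gt hM_pos])
    intro t ht
    have h : -M < -Γ t := hb t ht
    linarith
  exact ⟨fun t ht => lt_trans hm_pos (hlow t ht), m, M, hm_pos, hM_pos,
    fun t ht => ⟨(hlow t ht).le, (hhigh t ht).le⟩⟩
end

section
/- Consider the adaptive law θ̂'(t) = γ·Ω(t)·(Υ(t) − Ω(t)θ̂(t)) with Υ(t) = Ω(t)·θ for a constant θ ∈ ℝ, γ > 0, and Ω continuous. Then the error θ̃ = θ − θ̂ satisfies θ̃'(t) = −γΩ(t)²θ̃(t), hence |θ̃(t)| is nonincreasing (monotone estimation) for all t, and if Ω ≥ Ω_LB > 0 on [t_e, ∞), θ̃(t) → 0 exponentially. -/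
/-- The DREM adaptive law `θ̂' = γΩ(Υ - Ωθ̂)` with `Υ = Ωθ` yields error dynamics
`θ̃' = -γΩ²θ̃`, a nonincreasing error magnitude (monotone estimation), and
exponential convergence whenever `Ω ≥ Ω_LB > 0` on `[t_e, ∞)`. -/
theorem drem_monotone_estimation (θ : ℝ) (θhat Ω : ℝ → ℝ) (γ te ΩLB : ℝ)
    (hγ : 0 < γ) (hΩc : Continuous Ω)
    (hode : ∀ t, HasDerivAt θhat (γ * Ω t * (Ω t * θ - Ω t * θhat t)) t) :
    (∀ t, HasDerivAt (fun s => θ - θhat s) (-γ * (Ω t) ^ 2 * (θ - θhat t)) t) ∧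
    (∀ s t : ℝ, s ≤ t → |θ - θhat t| ≤ |θ - θhat s|) ∧
    (0 < ΩLB → (∀ t ≥ te, ΩLB ≤ Ω t) →
      ∀ t ≥ te, |θ - θhat t| ≤ |θ - θhat te| * Real.exp (-γ * ΩLB ^ 2 * (t - te))) := by
  set e : ℝ → ℝ := fun s => θ - θhat s with he_def
  have he : ∀ t, HasDerivAt e (-γ * (Ω t) ^ 2 * e t) t := by
    intro t
    have := (hasDerivAt_const t θ).sub (hode t)
    refine this.congr_deriv ?_
    simp [he_def]; ring
  refine ⟨he, ?_⟩
  -- integrating factor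
  have hgc : Continuous fun s => γ * Ω s ^ 2 := by continuity
  set F : ℝ → ℝ := fun t => ∫ s in (0:ℝ)..t, γ * Ω s ^ 2 with hF_def
  have hF : ∀ t, HasDerivAt F (γ * Ω t ^ 2) t := by
    intro t
    exact intervalIntegral.integral_hasDerivAt_right
      (hgc.intervalIntegrable _ _)
      hgc.aestronglyMeasurable.stronglyMeasurableAtFilter
      hgc.continuousAt
  set h : ℝ → ℝ := fun t => e t * Real.exp (F t) with hh_def
  have hh : ∀ t, HasDerivAt h 0 t := by
    intro t
    have := (he t).mul ((hF t).exp)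
    refine this.congr_deriv ?_
    ring
  have hconst : ∀ s t : ℝ, h s = h t := by
    intro s t
    have hd : Differentiable ℝ h := fun x => (hh x).differentiableAt
    have : ∀ x, deriv h x = 0 := fun x => (hh x).deriv
    exact (is_const_of_deriv_eq_zero hd this) s t
  have key : ∀ s t : ℝ, e t = e s * Real.exp (F s - F t) := by
    intro s t
    have := hconst s t
    have hexp : Real.exp (F t) ≠ 0 := (Real.exp_pos _).ne'
    rw [hh_def] at this; simp only at this; rw [Real.exp_sub]; field_simp
    linarith [this]
  have hFmono : ∀ s t : ℝ, s ≤ t → F t - F s = ∫ x in s..t, γ * Ω x ^ 2 := by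
    intro s t _
    have hadd : F s + (∫ x in s..t, γ * Ω x ^ 2) = F t :=
      intervalIntegral.integral_add_adjacent_intervals
        (hgc.intervalIntegrable 0 s) (hgc.intervalIntegrable s t)
    linarith
  constructor
  · intro s t hst
    show |e t| ≤ |e s|
    rw [key s t]
    rw [abs_mul, abs_of_pos (Real.exp_pos _)]
    have hFle : F s ≤ F t := by
      have := hFmono s t hst
      have hnn : 0 ≤ ∫ x in s..t, γ * Ω x ^ 2 :=
        intervalIntegral.integral_nonneg hst (fun x _ => by positivity)
      linarith
    calc |e s| * Real.exp (F s - F t) ≤ |e s| * 1 := by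
          apply mul_le_mul_of_nonneg_left _ (abs_nonneg _)
          rw [← Real.exp_zero]
          exact Real.exp_le_exp.mpr (by linarith)
      _ = |e s| := mul_one _
  · intro hΩLB hlb t ht
    show |e t| ≤ |e te| * _
    rw [key te t, abs_mul, abs_of_pos (Real.exp_pos _)]
    apply mul_le_mul_of_nonneg_left _ (abs_nonneg _)
    apply Real.exp_le_exp.mpr
    have heq := hFmono te t ht
    have hint : γ * ΩLB ^ 2 * (t - te) ≤ ∫ x in te..t, γ * Ω x ^ 2 := by
      have hmono : ∫ x in te..t, γ * ΩLB ^ 2 ≤ ∫ x in te..t, γ * Ω x ^ 2 := by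
        apply intervalIntegral.integral_mono_on ht
          (intervalIntegrable_const) (hgc.intervalIntegrable _ _)
        intro x hx
        have h1 : ΩLB ≤ Ω x := hlb x hx.1
        have h2 : ΩLB ^ 2 ≤ Ω x ^ 2 := by nlinarith
        nlinarith
      simpa using hmono.trans_eq' (by simp; ring)
    nlinarith
end

section
/- Let e : ℝ → ℝⁿ satisfy e'(t) = A_ref·e(t) + B·ε(t) where A_ref is Hurwitz with A_refᵀP + P·A_ref = −Q for some symmetric positive definite P, Q, and ‖ε(t)‖ ≤ c·e^{−κ(t−t₀)} for some c, κ > 0. Then e(t) → 0 exponentially: there exist ρ, κ' > 0 with ‖e(t)‖ ≤ ρ·(‖e(t₀)‖ + c)·e^{−κ'(t−t₀)} for all t ≥ t₀. -/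
open Matrix

-- derivative of quadratic form along a curve
lemma aux_hasDerivAt_quad {n : ℕ} (P : Matrix (Fin n) (Fin n) ℝ) (e : ℝ → Fin n → ℝ)
    (v : Fin n → ℝ) (t : ℝ) (h : HasDerivAt e v t) :
    HasDerivAt (fun s => e s ⬝ᵥ P *ᵥ e s) (v ⬝ᵥ P *ᵥ e t + e t ⬝ᵥ P *ᵥ v) t := by
  have hc := hasDerivAt_pi.mp h
  have h1 : ∀ i, HasDerivAt (fun s => (P *ᵥ e s) i) ((P *ᵥ v) i) t := by
    intro i
    simpa [mulVec, dotProduct] using HasDerivAt.fun_sum (fun j _ => (hc j).const_mul (P i j))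
  have h2 := HasDerivAt.fun_sum (fun i (_ : i ∈ Finset.univ) => (hc i).mul (h1 i))
  have key : HasDerivAt (fun s => e s ⬝ᵥ P *ᵥ e s)
      (∑ i, (v i * (P *ᵥ e t) i + e t i * (P *ᵥ v) i)) t := by
    simpa [dotProduct] using h2
  convert key using 1
  simp [dotProduct, Finset.sum_add_distrib]

lemma aux_mulVec_dot {n : ℕ} (A : Matrix (Fin n) (Fin n) ℝ) (x w : Fin n → ℝ) :
    (A *ᵥ x) ⬝ᵥ w = x ⬝ᵥ (Aᵀ *ᵥ w) := by
  rw [dotProduct_comm, dotProduct_mulVec, ← mulVec_transpose, dotProduct_comm]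

lemma aux_dot_abs_le {n : ℕ} (x y : Fin n → ℝ) : |x ⬝ᵥ y| ≤ n * ‖x‖ * ‖y‖ := by
  calc |x ⬝ᵥ y| ≤ ∑ i, |x i * y i| := Finset.abs_sum_le_sum_abs _ _
    _ ≤ ∑ _i : Fin n, ‖x‖ * ‖y‖ := by
        refine Finset.sum_le_sum fun i _ => ?_
        rw [abs_mul]
        exact mul_le_mul ((Real.norm_eq_abs _) ▸ norm_le_pi_norm x i)
          ((Real.norm_eq_abs _) ▸ norm_le_pi_norm y i) (abs_nonneg _) (norm_nonneg _)
    _ = n * ‖x‖ * ‖y‖ := by simp [Finset.sum_const, Finset.card_univ]; ring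

lemma aux_mulVec_norm_le {a b : ℕ} (M : Matrix (Fin a) (Fin b) ℝ) (v : Fin b → ℝ) :
    ‖M *ᵥ v‖ ≤ (∑ i, ∑ j, |M i j|) * ‖v‖ := by
  have hS : (0:ℝ) ≤ ∑ i, ∑ j, |M i j| := by positivity
  rw [pi_norm_le_iff_of_nonneg (by positivity)]
  intro i
  rw [Real.norm_eq_abs]
  have hMi : (M *ᵥ v) i = ∑ j, M i j * v j := by simp [mulVec, dotProduct]
  rw [hMi]
  calc |∑ j, M i j * v j| ≤ ∑ j, |M i j * v j| := Finset.abs_sum_le_sum_abs _ _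
    _ ≤ ∑ j, |M i j| * ‖v‖ := by
        refine Finset.sum_le_sum fun j _ => ?_
        rw [abs_mul]
        exact mul_le_mul_of_nonneg_left ((Real.norm_eq_abs _) ▸ norm_le_pi_norm v j) (abs_nonneg _)
    _ = (∑ j, |M i j|) * ‖v‖ := by rw [Finset.sum_mul]
    _ ≤ (∑ i, ∑ j, |M i j|) * ‖v‖ := by
        gcongr
        exact Finset.single_le_sum (f := fun i => ∑ j, |M i j|)
          (fun k _ => by positivity) (Finset.mem_univ i)

lemma aux_quad_cont {n : ℕ} (Q : Matrix (Fin n) (Fin n) ℝ) :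
    Continuous fun x : Fin n → ℝ => x ⬝ᵥ Q *ᵥ x := by
  have : (fun x : Fin n → ℝ => x ⬝ᵥ Q *ᵥ x) = fun x => ∑ i, x i * ∑ j, Q i j * x j := by
    funext x; simp [dotProduct, mulVec]
  rw [this]
  exact continuous_finset_sum _ fun i _ => (continuous_apply i).mul
    (continuous_finset_sum _ fun j _ => continuous_const.mul (continuous_apply j))

lemma aux_quad_smul {n : ℕ} (Q : Matrix (Fin n) (Fin n) ℝ) (r : ℝ) (x : Fin n → ℝ) :
    (r • x) ⬝ᵥ Q *ᵥ (r • x) = r ^ 2 * (x ⬝ᵥ Q *ᵥ x) := by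
  rw [mulVec_smul, smul_dotProduct, dotProduct_smul]
  simp [smul_eq_mul]; ring

lemma aux_posdef_lower {n : ℕ} (hn : n ≠ 0) (Q : Matrix (Fin n) (Fin n) ℝ) (hQ : Q.PosDef) :
    ∃ μ > 0, ∀ x : Fin n → ℝ, μ * ‖x‖ ^ 2 ≤ x ⬝ᵥ Q *ᵥ x := by
  haveI : Nontrivial (Fin n → ℝ) := by
    have : 0 < n := Nat.pos_of_ne_zero hn
    haveI : NeZero n := ⟨hn⟩
    infer_instance
  have hs : (Metric.sphere (0 : Fin n → ℝ) 1).Nonempty :=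
    NormedSpace.sphere_nonempty.mpr zero_le_one
  obtain ⟨x0, hx0, hmin⟩ := (isCompact_sphere (0 : Fin n → ℝ) 1).exists_isMinOn hs
    (aux_quad_cont Q).continuousOn
  have hmin : ∀ y ∈ Metric.sphere (0 : Fin n → ℝ) 1, x0 ⬝ᵥ Q *ᵥ x0 ≤ y ⬝ᵥ Q *ᵥ y :=
    fun y hy => hmin hy
  have hx0norm : ‖x0‖ = 1 := by simpa using mem_sphere_zero_iff_norm.mp hx0
  have hx0ne : x0 ≠ 0 := by intro h; rw [h] at hx0norm; simp at hx0norm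
  have hpos : 0 < x0 ⬝ᵥ Q *ᵥ x0 := by
    have := hQ.dotProduct_mulVec_pos hx0ne
    simpa [star_trivial] using this
  refine ⟨x0 ⬝ᵥ Q *ᵥ x0, hpos, fun x => ?_⟩
  rcases eq_or_ne x 0 with rfl | hx
  · simp
  · have hxn : 0 < ‖x‖ := norm_pos_iff.mpr hx
    have hyn : (‖x‖⁻¹ • x) ∈ Metric.sphere (0 : Fin n → ℝ) 1 := by
      rw [mem_sphere_zero_iff_norm, norm_smul]
      simp [abs_of_pos (inv_pos.mpr hxn), inv_mul_cancel₀ hxn.ne']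
    have h1 : x = ‖x‖ • (‖x‖⁻¹ • x) := by
      rw [smul_smul, mul_inv_cancel₀ hxn.ne', one_smul]
    have h2 : x ⬝ᵥ Q *ᵥ x = ‖x‖ ^ 2 * ((‖x‖⁻¹ • x) ⬝ᵥ Q *ᵥ (‖x‖⁻¹ • x)) := by
      conv_lhs => rw [h1]
      rw [aux_quad_smul]
    have h3 := hmin _ hyn
    nlinarith [sq_nonneg ‖x‖]


lemma aux_key (μ M a b X : ℝ) (hμ : 0 < μ) (hX : X ≤ μ / 2 * a ^ 2) :
    -(μ * a ^ 2) + 2 * M * (b * a) ≤ -X + 2 * M ^ 2 / μ * b ^ 2 := by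
  have h2 : μ * (-(μ * a ^ 2) + 2 * M * (b * a)) ≤ μ * (-X + 2 * M ^ 2 / μ * b ^ 2) := by
    have hr : μ * (-X + 2 * M ^ 2 / μ * b ^ 2) = -(μ * X) + 2 * M ^ 2 * b ^ 2 := by
      field_simp
    rw [hr]
    nlinarith [sq_nonneg (μ * a - 2 * M * b), mul_le_mul_of_nonneg_left hX hμ.le]
  exact (mul_le_mul_iff_right₀ hμ).mp h2

lemma aux_sqrt_add (x y : ℝ) (hx : 0 ≤ x) (hy : 0 ≤ y) :
    Real.sqrt (x + y) ≤ Real.sqrt x + Real.sqrt y := by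
  have h := Real.sqrt_le_sqrt (show x + y ≤ (Real.sqrt x + Real.sqrt y) ^ 2 by
    nlinarith [Real.sq_sqrt hx, Real.sq_sqrt hy,
      mul_nonneg (Real.sqrt_nonneg x) (Real.sqrt_nonneg y)])
  rwa [Real.sqrt_sq (by positivity)] at h

lemma aux_s3 (s t u w c : ℝ) (hs : 0 ≤ s) (ht : 0 ≤ t) (hu : 0 ≤ u) (hw : 0 ≤ w) (hc : 0 < c) :
    s * w + t ≤ (s + t / c + u) * (w + c) := by
  have htc : t / c * c = t := div_mul_cancel₀ t hc.ne'
  have h1 : (0:ℝ) ≤ t / c := div_nonneg ht hc.le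
  nlinarith [mul_nonneg hs hc.le, mul_nonneg h1 hw, mul_nonneg hu hw, mul_nonneg hu hc.le]

lemma aux_h2 (α γ C1 V0 D : ℝ) (hα : 0 < α) (hγα : γ ≤ α / 2) (hV0 : 0 ≤ V0) (hD : 0 < D)
    (hαD : α / 2 * D = C1 + 1) : C1 + 1 ≤ (α - γ) * (V0 + D) := by
  nlinarith [mul_nonneg (by linarith : (0:ℝ) ≤ α - γ) hV0,
    mul_le_mul_of_nonneg_right (by linarith : α / 2 ≤ α - γ) hD.le]

set_option maxHeartbeats 1000000 in
/-- A Hurwitz linear system (witnessed by the Lyapunov equation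
`A_refᵀP + PA_ref = -Q`, `P, Q ≻ 0`) driven by an exponentially decaying input
`ε` has exponentially decaying state:
`‖e(t)‖ ≤ ρ (‖e(t₀)‖ + c) e^{-κ'(t-t₀)}` for some `ρ, κ' > 0`. -/
theorem hurwitz_exp_decaying_input {n m : ℕ}
    (Aref : Matrix (Fin n) (Fin n) ℝ) (B : Matrix (Fin n) (Fin m) ℝ)
    (P Q : Matrix (Fin n) (Fin n) ℝ) (hP : P.PosDef) (hQ : Q.PosDef)
    (hLyap : Aref.transpose * P + P * Aref = -Q)
    (e : ℝ → Fin n → ℝ) (ε : ℝ → Fin m → ℝ) (t0 c κ : ℝ)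
    (hc : 0 < c) (hκ : 0 < κ) (hεc : Continuous ε)
    (hode : ∀ t, HasDerivAt e (Aref *ᵥ e t + B *ᵥ ε t) t)
    (hε : ∀ t ≥ t0, ‖ε t‖ ≤ c * Real.exp (-κ * (t - t0))) :
    ∃ ρ κ' : ℝ, 0 < ρ ∧ 0 < κ' ∧
      ∀ t ≥ t0, ‖e t‖ ≤ ρ * (‖e t0‖ + c) * Real.exp (-κ' * (t - t0)) := by
  rcases Nat.eq_zero_or_pos n with hn | hn
  · subst hn
    refine ⟨1, κ, one_pos, hκ, fun t ht => ?_⟩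
    have h0 : e t = 0 := Subsingleton.elim _ _
    rw [h0, norm_zero]
    positivity
  -- quadratic form bounds
  obtain ⟨μ, hμ, hμQ⟩ := aux_posdef_lower hn.ne' Q hQ
  obtain ⟨mP, hmP, hmPle⟩ := aux_posdef_lower hn.ne' P hP
  obtain ⟨SP, hSP⟩ : ∃ x : ℝ, x = ∑ i, ∑ j, |P i j| := ⟨_, rfl⟩
  obtain ⟨SB, hSB⟩ : ∃ x : ℝ, x = ∑ i, ∑ j, |B i j| := ⟨_, rfl⟩
  have hSP0 : 0 ≤ SP := by rw [hSP]; positivity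
  have hSB0 : 0 ≤ SB := by rw [hSB]; positivity
  obtain ⟨lP, hlP⟩ : ∃ x : ℝ, x = n * SP + 1 := ⟨_, rfl⟩
  have hn0 : (0:ℝ) ≤ (n:ℝ) := Nat.cast_nonneg n
  have hlP0 : 0 < lP := by rw [hlP]; positivity
  have hlPub : ∀ x : Fin n → ℝ, x ⬝ᵥ P *ᵥ x ≤ lP * ‖x‖ ^ 2 := by
    intro x
    have h1 := aux_dot_abs_le x (P *ᵥ x)
    have h2 := aux_mulVec_norm_le P x
    rw [← hSP] at h2
    have h3 : x ⬝ᵥ P *ᵥ x ≤ |x ⬝ᵥ P *ᵥ x| := le_abs_self _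
    have hx0 : (0:ℝ) ≤ ‖x‖ := norm_nonneg _
    have h4 : (n:ℝ) * ‖x‖ * ‖P *ᵥ x‖ ≤ (n:ℝ) * ‖x‖ * (SP * ‖x‖) :=
      mul_le_mul_of_nonneg_left h2 (by positivity)
    rw [hlP]
    calc x ⬝ᵥ P *ᵥ x ≤ |x ⬝ᵥ P *ᵥ x| := h3
      _ ≤ (n:ℝ) * ‖x‖ * ‖P *ᵥ x‖ := h1
      _ ≤ (n:ℝ) * ‖x‖ * (SP * ‖x‖) := h4
      _ = ((n:ℝ) * SP) * ‖x‖ ^ 2 := by ring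
      _ ≤ ((n:ℝ) * SP + 1) * ‖x‖ ^ 2 := by nlinarith [sq_nonneg ‖x‖]
  obtain ⟨M, hM⟩ : ∃ x : ℝ, x = n * SB * SP := ⟨_, rfl⟩
  have hM0 : 0 ≤ M := by rw [hM]; positivity
  have hcross : ∀ (u : Fin m → ℝ) (x : Fin n → ℝ),
      (B *ᵥ u) ⬝ᵥ (P *ᵥ x) + x ⬝ᵥ (P *ᵥ (B *ᵥ u)) ≤ 2 * M * (‖u‖ * ‖x‖) := by
    intro u x
    have h1 := aux_dot_abs_le (B *ᵥ u) (P *ᵥ x)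
    have h2 := aux_dot_abs_le x (P *ᵥ (B *ᵥ u))
    have h3 := aux_mulVec_norm_le P x
    have h4 := aux_mulVec_norm_le B u
    have h5 := aux_mulVec_norm_le P (B *ᵥ u)
    rw [← hSP] at h3 h5
    rw [← hSB] at h4
    have l1 : (B *ᵥ u) ⬝ᵥ (P *ᵥ x) ≤ |(B *ᵥ u) ⬝ᵥ (P *ᵥ x)| := le_abs_self _
    have l2 : x ⬝ᵥ (P *ᵥ (B *ᵥ u)) ≤ |x ⬝ᵥ (P *ᵥ (B *ᵥ u))| := le_abs_self _
    have hx0 : (0:ℝ) ≤ ‖x‖ := norm_nonneg _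
    have hu0 : (0:ℝ) ≤ ‖u‖ := norm_nonneg _
    have hPx0 : (0:ℝ) ≤ ‖P *ᵥ x‖ := norm_nonneg _
    have c1 : (B *ᵥ u) ⬝ᵥ (P *ᵥ x) ≤ M * (‖u‖ * ‖x‖) := by
      refine le_trans (le_trans l1 h1) ?_
      have hA : (n:ℝ) * ‖B *ᵥ u‖ ≤ (n:ℝ) * (SB * ‖u‖) := mul_le_mul_of_nonneg_left h4 hn0
      calc (n:ℝ) * ‖B *ᵥ u‖ * ‖P *ᵥ x‖ ≤ (n:ℝ) * (SB * ‖u‖) * (SP * ‖x‖) :=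
            mul_le_mul hA h3 hPx0 (by positivity)
        _ = M * (‖u‖ * ‖x‖) := by rw [hM]; ring
    have c2 : x ⬝ᵥ (P *ᵥ (B *ᵥ u)) ≤ M * (‖u‖ * ‖x‖) := by
      refine le_trans (le_trans l2 h2) ?_
      have hPBu : ‖P *ᵥ (B *ᵥ u)‖ ≤ SP * (SB * ‖u‖) :=
        le_trans h5 (mul_le_mul_of_nonneg_left h4 hSP0)
      calc (n:ℝ) * ‖x‖ * ‖P *ᵥ (B *ᵥ u)‖ ≤ (n:ℝ) * ‖x‖ * (SP * (SB * ‖u‖)) :=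
            mul_le_mul_of_nonneg_left hPBu (by positivity)
        _ = M * (‖u‖ * ‖x‖) := by rw [hM]; ring
    linarith
  -- the Lyapunov function and its derivative
  obtain ⟨V, hV⟩ : ∃ f : ℝ → ℝ, f = fun t => e t ⬝ᵥ P *ᵥ e t := ⟨_, rfl⟩
  obtain ⟨F, hF⟩ : ∃ f : ℝ → ℝ, f = fun t =>
      -(e t ⬝ᵥ Q *ᵥ e t) + ((B *ᵥ ε t) ⬝ᵥ (P *ᵥ e t) + e t ⬝ᵥ (P *ᵥ (B *ᵥ ε t))) := ⟨_, rfl⟩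
  have hident : ∀ (x : Fin n → ℝ) (u : Fin m → ℝ),
      (Aref *ᵥ x + B *ᵥ u) ⬝ᵥ P *ᵥ x + x ⬝ᵥ P *ᵥ (Aref *ᵥ x + B *ᵥ u)
        = -(x ⬝ᵥ Q *ᵥ x) + ((B *ᵥ u) ⬝ᵥ (P *ᵥ x) + x ⬝ᵥ (P *ᵥ (B *ᵥ u))) := by
    intro x u
    have e1 : (Aref *ᵥ x) ⬝ᵥ (P *ᵥ x) + x ⬝ᵥ (P *ᵥ (Aref *ᵥ x)) = -(x ⬝ᵥ Q *ᵥ x) := by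
      rw [aux_mulVec_dot, mulVec_mulVec, mulVec_mulVec, ← dotProduct_add, ← add_mulVec,
        hLyap, neg_mulVec, dotProduct_neg]
    rw [add_dotProduct, mulVec_add, dotProduct_add]
    linarith [e1]
  have hVd : ∀ t, HasDerivAt V (F t) t := by
    intro t
    rw [hV, hF]
    have h := aux_hasDerivAt_quad P e (Aref *ᵥ e t + B *ᵥ ε t) t (hode t)
    rw [hident (e t) (ε t)] at h
    exact h
  have hecont : Continuous e := continuous_iff_continuousAt.mpr fun t => (hode t).continuousAt
  have hVcont : Continuous V := by rw [hV]; exact (aux_quad_cont P).comp hecont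
  -- constants
  obtain ⟨α, hα⟩ : ∃ x : ℝ, x = μ / (2 * lP) := ⟨_, rfl⟩
  have hα0 : 0 < α := by rw [hα]; positivity
  have hlPne : lP ≠ 0 := ne_of_gt hlP0
  have hμne : μ ≠ 0 := ne_of_gt hμ
  have hαne : α ≠ 0 := ne_of_gt hα0
  have hcne : c ≠ 0 := ne_of_gt hc
  have hαlP : α * lP = μ / 2 := by rw [hα]; field_simp
  obtain ⟨C0, hC0⟩ : ∃ x : ℝ, x = 2 * M ^ 2 / μ := ⟨_, rfl⟩
  have hC00 : 0 ≤ C0 := by rw [hC0]; positivity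
  have hμC0 : μ * C0 = 2 * M ^ 2 := by rw [hC0]; field_simp
  obtain ⟨C1, hC1⟩ : ∃ x : ℝ, x = C0 * c ^ 2 := ⟨_, rfl⟩
  have hC10 : 0 ≤ C1 := by rw [hC1]; positivity
  -- differential inequality
  have hFb : ∀ t, t0 ≤ t → F t ≤ -α * V t + C1 * Real.exp (-(2 * κ) * (t - t0)) := by
    intro t ht
    have hb : ‖ε t‖ ≤ c * Real.exp (-κ * (t - t0)) := hε t ht
    have hb0 : (0:ℝ) ≤ ‖ε t‖ := norm_nonneg _
    have ha0 : (0:ℝ) ≤ ‖e t‖ := norm_nonneg _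
    have hQx := hμQ (e t)
    have hVub : V t ≤ lP * ‖e t‖ ^ 2 := by rw [hV]; exact hlPub (e t)
    have hcr := hcross (ε t) (e t)
    have hexp2 : Real.exp (-κ * (t - t0)) * Real.exp (-κ * (t - t0))
        = Real.exp (-(2 * κ) * (t - t0)) := by
      rw [← Real.exp_add]; congr 1; ring
    have hb2 : ‖ε t‖ ^ 2 ≤ c ^ 2 * Real.exp (-(2 * κ) * (t - t0)) := by
      have h := mul_le_mul hb hb hb0 (by positivity)
      calc ‖ε t‖ ^ 2 = ‖ε t‖ * ‖ε t‖ := sq ‖ε t‖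
        _ ≤ (c * Real.exp (-κ * (t - t0))) * (c * Real.exp (-κ * (t - t0))) := h
        _ = c ^ 2 * Real.exp (-(2 * κ) * (t - t0)) := by rw [← hexp2]; ring
    have hαV : α * V t ≤ μ / 2 * ‖e t‖ ^ 2 := by
      calc α * V t ≤ α * (lP * ‖e t‖ ^ 2) := mul_le_mul_of_nonneg_left hVub hα0.le
        _ = (α * lP) * ‖e t‖ ^ 2 := by ring
        _ = μ / 2 * ‖e t‖ ^ 2 := by rw [hαlP]
    have key0 := aux_key μ M ‖e t‖ ‖ε t‖ (α * V t) hμ hαV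
    rw [← hC0] at key0
    have key : -(μ * ‖e t‖ ^ 2) + 2 * M * (‖ε t‖ * ‖e t‖)
        ≤ -α * V t + C0 * ‖ε t‖ ^ 2 := by linarith
    have hFle : F t ≤ -(μ * ‖e t‖ ^ 2) + 2 * M * (‖ε t‖ * ‖e t‖) := by
      rw [hF]; dsimp only; linarith
    have hfin : C0 * ‖ε t‖ ^ 2 ≤ C1 * Real.exp (-(2 * κ) * (t - t0)) := by
      rw [hC1]
      calc C0 * ‖ε t‖ ^ 2 ≤ C0 * (c ^ 2 * Real.exp (-(2 * κ) * (t - t0))) :=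
            mul_le_mul_of_nonneg_left hb2 hC00
        _ = C0 * c ^ 2 * Real.exp (-(2 * κ) * (t - t0)) := by ring
    linarith
  -- comparison with exponential supersolution
  obtain ⟨γ, hγ⟩ : ∃ x : ℝ, x = min α (2 * κ) / 2 := ⟨_, rfl⟩
  have hγ0 : 0 < γ := by
    have h1 : 0 < min α (2 * κ) := lt_min hα0 (by linarith)
    rw [hγ]; linarith
  have hγα : γ ≤ α / 2 := by
    rw [hγ]; have := min_le_left α (2 * κ); linarith
  have hγκ : γ ≤ 2 * κ := by
    rw [hγ]; have h1 := min_le_right α (2 * κ); have h2 := min_le_left α (2 * κ); linarith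
  obtain ⟨D, hD⟩ : ∃ x : ℝ, x = 2 * (C1 + 1) / α := ⟨_, rfl⟩
  have hD0 : 0 < D := by rw [hD]; positivity
  have hαD : α / 2 * D = C1 + 1 := by rw [hD]; field_simp
  have hV0 : 0 ≤ V t0 := by
    rw [hV]
    exact le_trans (mul_nonneg hmP.le (sq_nonneg _)) (hmPle (e t0))
  obtain ⟨W, hW⟩ : ∃ f : ℝ → ℝ, f = fun t => (V t0 + D) * Real.exp (-γ * (t - t0)) := ⟨_, rfl⟩
  have hWd : ∀ x, HasDerivAt W (-γ * W x) x := by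
    intro x
    rw [hW]
    have h := (((hasDerivAt_id x).sub_const t0).const_mul (-γ)).exp.const_mul (V t0 + D)
    refine h.congr_deriv ?_
    simp only [id_eq]
    ring
  have hcomp : ∀ T, t0 ≤ T → V T ≤ W T := by
    intro T hT
    have happ := image_le_of_deriv_right_lt_deriv_boundary (f := V) (f' := F) (a := t0) (b := T)
      (B := W) (B' := fun x => -γ * W x)
      hVcont.continuousOn (fun x _ => (hVd x).hasDerivWithinAt)
      (by
        rw [hW]
        simp only [sub_self, mul_zero, Real.exp_zero, mul_one]
        linarith)
      hWd
      (fun x hx hVW => by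
        have hx0 : t0 ≤ x := hx.1
        have hs0 : 0 ≤ x - t0 := sub_nonneg.mpr hx0
        have h1 := hFb x hx0
        have hexp : Real.exp (-(2 * κ) * (x - t0)) ≤ Real.exp (-γ * (x - t0)) := by
          apply Real.exp_le_exp.mpr
          have hmul : 0 ≤ (2 * κ - γ) * (x - t0) := mul_nonneg (by linarith) hs0
          linarith [hmul]
        have hWx : W x = (V t0 + D) * Real.exp (-γ * (x - t0)) := by rw [hW]
        have hep : 0 < Real.exp (-γ * (x - t0)) := Real.exp_pos _
        have hkey : C1 * Real.exp (-(2 * κ) * (x - t0)) < (α - γ) * W x := by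
          calc C1 * Real.exp (-(2 * κ) * (x - t0))
              ≤ C1 * Real.exp (-γ * (x - t0)) := mul_le_mul_of_nonneg_left hexp hC10
            _ < (C1 + 1) * Real.exp (-γ * (x - t0)) :=
                mul_lt_mul_of_pos_right (by linarith) hep
            _ ≤ (α - γ) * W x := by
                rw [hWx]
                have h2 : C1 + 1 ≤ (α - γ) * (V t0 + D) := aux_h2 α γ C1 (V t0) D hα0 hγα hV0 hD0 hαD
                calc (C1 + 1) * Real.exp (-γ * (x - t0))
                    ≤ ((α - γ) * (V t0 + D)) * Real.exp (-γ * (x - t0)) :=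
                      mul_le_mul_of_nonneg_right h2 hep.le
                  _ = (α - γ) * ((V t0 + D) * Real.exp (-γ * (x - t0))) := by ring
        rw [hVW] at h1
        show F x < -γ * W x
        linarith)
    exact happ (Set.right_mem_Icc.mpr hT)
  -- final constants
  obtain ⟨κ', hκ'⟩ : ∃ x : ℝ, x = γ / 2 := ⟨_, rfl⟩
  have hκ'0 : 0 < κ' := by rw [hκ']; positivity
  have hsmP : 0 < Real.sqrt mP := Real.sqrt_pos.mpr hmP
  have hsmPne : Real.sqrt mP ≠ 0 := ne_of_gt hsmP
  obtain ⟨ρ, hρ⟩ : ∃ x : ℝ, x = (Real.sqrt lP + Real.sqrt D / c) / Real.sqrt mP + 1 := ⟨_, rfl⟩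
  have hρ0 : 0 < ρ := by rw [hρ]; positivity
  refine ⟨ρ, κ', hρ0, hκ'0, fun t ht => ?_⟩
  obtain ⟨R, hR⟩ : ∃ x : ℝ, x = ρ * (‖e t0‖ + c) := ⟨_, rfl⟩
  have hR0 : 0 < R := by
    rw [hR]; exact mul_pos hρ0 (by positivity)
  have hVt := hcomp t ht
  have hmPt : mP * ‖e t‖ ^ 2 ≤ V t := by rw [hV]; exact hmPle (e t)
  have hsq : Real.sqrt (V t0 + D) ≤ Real.sqrt mP * R := by
    have s1 : Real.sqrt (V t0 + D) ≤ Real.sqrt (V t0) + Real.sqrt D :=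
      aux_sqrt_add (V t0) D hV0 hD0.le
    have s2 : Real.sqrt (V t0) ≤ Real.sqrt lP * ‖e t0‖ := by
      have hub : V t0 ≤ lP * ‖e t0‖ ^ 2 := by rw [hV]; exact hlPub (e t0)
      have h := Real.sqrt_le_sqrt hub
      rwa [show lP * ‖e t0‖ ^ 2 = (Real.sqrt lP * ‖e t0‖) ^ 2 by
        rw [mul_pow, Real.sq_sqrt hlP0.le], Real.sqrt_sq (by positivity)] at h
    have s3 : Real.sqrt lP * ‖e t0‖ + Real.sqrt D ≤ Real.sqrt mP * R := by
      have hid : Real.sqrt mP * ρ = Real.sqrt lP + Real.sqrt D / c + Real.sqrt mP := by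
        rw [hρ]; field_simp
      have h1 : Real.sqrt mP * R
          = (Real.sqrt lP + Real.sqrt D / c + Real.sqrt mP) * (‖e t0‖ + c) := by
        rw [hR, ← hid]; ring
      rw [h1]
      exact aux_s3 (Real.sqrt lP) (Real.sqrt D) (Real.sqrt mP) ‖e t0‖
        c (Real.sqrt_nonneg _) (Real.sqrt_nonneg _) (Real.sqrt_nonneg _) (norm_nonneg _) hc
    linarith
  have hmain : V t0 + D ≤ mP * R ^ 2 := by
    have h := mul_self_le_mul_self (Real.sqrt_nonneg (V t0 + D)) hsq
    rw [Real.mul_self_sqrt (by linarith)] at h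
    calc V t0 + D ≤ Real.sqrt mP * R * (Real.sqrt mP * R) := h
      _ = (Real.sqrt mP * Real.sqrt mP) * R ^ 2 := by ring
      _ = mP * R ^ 2 := by rw [Real.mul_self_sqrt hmP.le]
  have hexpid : Real.exp (-γ * (t - t0)) = Real.exp (-κ' * (t - t0)) ^ 2 := by
    rw [← Real.exp_nat_mul]
    congr 1
    rw [hκ']; push_cast; ring
  have hsqbound : ‖e t‖ ^ 2 ≤ (R * Real.exp (-κ' * (t - t0))) ^ 2 := by
    have h1 : mP * ‖e t‖ ^ 2 ≤ mP * (R * Real.exp (-κ' * (t - t0))) ^ 2 := by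
      calc mP * ‖e t‖ ^ 2 ≤ V t := hmPt
        _ ≤ W t := hVt
        _ = (V t0 + D) * Real.exp (-γ * (t - t0)) := by rw [hW]
        _ ≤ mP * R ^ 2 * Real.exp (-γ * (t - t0)) :=
            mul_le_mul_of_nonneg_right hmain (Real.exp_pos _).le
        _ = mP * (R * Real.exp (-κ' * (t - t0))) ^ 2 := by rw [hexpid]; ring
    exact le_of_mul_le_mul_left h1 hmP
  have hfin := Real.sqrt_le_sqrt hsqbound
  rw [Real.sqrt_sq (norm_nonneg _), Real.sqrt_sq (by positivity)] at hfin
  rw [hR] at hfin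
  exact hfin
end

section
/- Let e_ref solve e_ref'(t) = A_ref·e_ref(t) + B·Δ(t) on [t_r, ∞), and define the reset filters e_f'(t) = −k·e_f(t) + e_ref(t), e_f(t_r) = 0, and Δ_f'(t) = −k·Δ_f(t) + Δ(t), Δ_f(t_r) = 0, with k > 0. Then for all t ≥ t_r: B·Δ_f(t) = e_ref(t) − e^{−k(t−t_r)}·e_ref(t_r) − k·e_f(t) − A_ref·e_f(t). -/
open Matrix

/-- Uncertainty-parameterization identity (Lemma 1): filtering both sides of the
error equation `ė_ref = A_ref e_ref + BΔ` by the reset first-order filters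
`e_f' = -k e_f + e_ref`, `Δ_f' = -k Δ_f + Δ` (both zero at `t_r`) yields
`B Δ_f(t) = e_ref(t) - e^{-k(t-t_r)} e_ref(t_r) - k e_f(t) - A_ref e_f(t)`. -/
theorem uncertainty_parameterization {n m : ℕ}
    (Aref : Matrix (Fin n) (Fin n) ℝ) (B : Matrix (Fin n) (Fin m) ℝ)
    (eref ef : ℝ → Fin n → ℝ) (Δ Δf : ℝ → Fin m → ℝ) (k tr : ℝ) (hk : 0 < k)
    (hΔc : Continuous Δ)
    (heref : ∀ t, HasDerivAt eref (Aref *ᵥ eref t + B *ᵥ Δ t) t)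
    (hef : ∀ t, HasDerivAt ef (-k • ef t + eref t) t) (hef0 : ef tr = 0)
    (hΔf : ∀ t, HasDerivAt Δf (-k • Δf t + Δ t) t) (hΔf0 : Δf tr = 0) :
    ∀ t ≥ tr, B *ᵥ Δf t =
      eref t - Real.exp (-k * (t - tr)) • eref tr - k • ef t - Aref *ᵥ ef t := by
  -- continuous linear maps for mulVec
  set LB : (Fin m → ℝ) →L[ℝ] (Fin n → ℝ) :=
    LinearMap.toContinuousLinearMap (Matrix.mulVecLin B) with hLB
  set LA : (Fin n → ℝ) →L[ℝ] (Fin n → ℝ) :=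
    LinearMap.toContinuousLinearMap (Matrix.mulVecLin Aref) with hLA
  have hLBa : ∀ v, LB v = B *ᵥ v := fun v => rfl
  have hLAa : ∀ v, LA v = Aref *ᵥ v := fun v => rfl
  -- the defect function
  set F : ℝ → Fin n → ℝ := fun t =>
    B *ᵥ Δf t - eref t + Real.exp (-k * (t - tr)) • eref tr + k • ef t + Aref *ᵥ ef t
    with hF
  have hFtr : F tr = 0 := by
    simp [hF, hef0, hΔf0, Matrix.mulVec_zero]
  -- F has derivative -k • F t
  have hF' : ∀ t, HasDerivAt F (-k • F t) t := by
    intro t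
    have h1 : HasDerivAt (fun t => B *ᵥ Δf t) (B *ᵥ (-k • Δf t + Δ t)) t := by
      have := (LB.hasFDerivAt (x := Δf t)).comp_hasDerivAt t (hΔf t)
      simpa [hLBa, Function.comp_def] using this
    have h4 : HasDerivAt (fun t => Aref *ᵥ ef t) (Aref *ᵥ (-k • ef t + eref t)) t := by
      have := (LA.hasFDerivAt (x := ef t)).comp_hasDerivAt t (hef t)
      simpa [hLAa, Function.comp_def] using this
    have hexp : HasDerivAt (fun t => Real.exp (-k * (t - tr)))
        (Real.exp (-k * (t - tr)) * (-k)) t := by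
      have hc : HasDerivAt (fun t : ℝ => -k * (t - tr)) (-k) t := by
        simpa using (((hasDerivAt_id t).sub_const tr).const_mul (-k))
      simpa using hc.exp
    have h3 : HasDerivAt (fun t => Real.exp (-k * (t - tr)) • eref tr)
        ((Real.exp (-k * (t - tr)) * (-k)) • eref tr) t := hexp.smul_const (eref tr)
    have h5 : HasDerivAt (fun t => k • ef t) (k • (-k • ef t + eref t)) t :=
      (hef t).const_smul k
    have hsum := ((((h1.sub (heref t)).add h3).add h5).add h4)
    refine hsum.congr_deriv ?_
    simp only [hF, Matrix.mulVec_add, Matrix.mulVec_smul]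
    module
  -- exp(k t) • F t has zero derivative, hence is constant
  set H : ℝ → Fin n → ℝ := fun t => Real.exp (k * t) • F t with hH
  have hH' : ∀ t, HasDerivAt H 0 t := by
    intro t
    have hc : HasDerivAt (fun t => Real.exp (k * t)) (Real.exp (k * t) * k) t := by
      simpa [mul_comm, Function.comp_def] using (Real.hasDerivAt_exp (k * t)).comp t
        ((hasDerivAt_id t).const_mul k)
    have := hc.smul (hF' t)
    refine this.congr_deriv ?_
    module
  have hconst : ∀ t, H t = H tr := by
    intro t
    apply is_const_of_fderiv_eq_zero (𝕜 := ℝ) (fun s => (hH' s).differentiableAt)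
    intro x
    have := (hH' x).hasFDerivAt.fderiv
    rw [this]; ext v i; simp
  have hF0 : ∀ t, F t = 0 := by
    intro t
    have h := hconst t
    have hE : Real.exp (k * t) ≠ 0 := Real.exp_ne_zero _
    rw [hH] at h
    simp only [hFtr, smul_zero] at h
    exact (smul_eq_zero.mp h).resolve_left hE
  intro t _
  have h := hF0 t
  rw [hF] at h
  rw [← sub_eq_zero]
  calc B *ᵥ Δf t - (eref t - Real.exp (-k * (t - tr)) • eref tr - k • ef t - Aref *ᵥ ef t)
      = B *ᵥ Δf t - eref t + Real.exp (-k * (t - tr)) • eref tr + k • ef t + Aref *ᵥ ef t := by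
        module
    _ = 0 := h
end

section
/- Let φ(t) = ∫_{t_r}^t e^{−l(t−τ)}Φ_f(τ)Φ_f(τ)ᵀ dτ with Φ_f continuous and FE over [t_r, t_e] with level α, and l > 0. Then for all t ≥ t_e, φ(t) ≥ e^{−l(t_e−t_r)}·α·I in the Loewner order; in particular ω(t) := det(φ(t)) ≥ (e^{−l(t_e−t_r)}α)ⁿ > 0 for t ≥ t_e. -/
open MeasureTheory Matrix

lemma det_lower_bound {n : ℕ} {A : Matrix (Fin n) (Fin n) ℝ} {c : ℝ} (hc : 0 < c)
    (h : (A - c • (1 : Matrix (Fin n) (Fin n) ℝ)).PosSemidef) : c ^ n ≤ A.det := by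
  have hA : A.IsHermitian := by
    have h1 : (A - c • (1 : Matrix (Fin n) (Fin n) ℝ)).IsHermitian := h.1
    have h2 : (c • (1 : Matrix (Fin n) (Fin n) ℝ)).IsHermitian := by
      unfold Matrix.IsHermitian; simp
    simpa using h1.add h2
  have heig : ∀ i, c ≤ hA.eigenvalues i := by
    intro i
    set v : Fin n → ℝ := ⇑(hA.eigenvectorBasis i) with hv
    have hquad := h.dotProduct_mulVec_nonneg v
    have hvv : dotProduct v v = 1 := by
      have hn : ‖hA.eigenvectorBasis i‖ = 1 := hA.eigenvectorBasis.orthonormal.1 i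
      have : (inner ℝ (hA.eigenvectorBasis i) (hA.eigenvectorBasis i) : ℝ) = 1 := by
        rw [real_inner_self_eq_norm_sq, hn]; norm_num
      simp only [PiLp.inner_apply, RCLike.inner_apply, conj_trivial] at this
      simpa [dotProduct, mul_comm] using this
    have hAv : dotProduct v (A *ᵥ v) = hA.eigenvalues i := by
      have := hA.eigenvalues_eq i
      simpa [hv] using this.symm
    have : dotProduct (star v) ((A - c • (1 : Matrix (Fin n) (Fin n) ℝ)) *ᵥ v)
        = hA.eigenvalues i - c := by
      rw [sub_mulVec, dotProduct_sub]
      rw [show ((c • (1 : Matrix (Fin n) (Fin n) ℝ)) *ᵥ v) = c • v by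
        rw [smul_mulVec, one_mulVec]]
      simp [hAv, dotProduct_smul, hvv]
    rw [this] at hquad
    linarith
  rw [hA.det_eq_prod_eigenvalues]
  calc c ^ n = ∏ _i : Fin n, c := by simp
    _ ≤ ∏ i, hA.eigenvalues i :=
      Finset.prod_le_prod (fun i _ => hc.le) (fun i _ => heig i)

lemma quad_eq {n : ℕ} (Φf : ℝ → Fin n → ℝ) (hΦc : Continuous Φf) (w : ℝ → ℝ)
    (hw : Continuous w) (a b : ℝ) (x : Fin n → ℝ) :
    dotProduct x ((Matrix.of (fun i j => ∫ τ in a..b, w τ * (Φf τ i * Φf τ j))) *ᵥ x)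
      = ∫ τ in a..b, w τ * (∑ i, Φf τ i * x i) ^ 2 := by
  have hcont : ∀ i, Continuous fun τ => Φf τ i := fun i => (continuous_apply i).comp hΦc
  have hci : ∀ i j : Fin n,
      IntervalIntegrable (fun τ => x i * (w τ * (Φf τ i * Φf τ j) * x j)) volume a b :=
    fun i j => (continuous_const.mul
      ((hw.mul ((hcont i).mul (hcont j))).mul continuous_const)).intervalIntegrable a b
  have hpt : ∀ τ, w τ * (∑ i, Φf τ i * x i) ^ 2
      = ∑ i, ∑ j, x i * (w τ * (Φf τ i * Φf τ j) * x j) := by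
    intro τ
    rw [sq, Finset.sum_mul_sum, Finset.mul_sum]
    exact Finset.sum_congr rfl fun i _ => by
      rw [Finset.mul_sum]
      exact Finset.sum_congr rfl fun j _ => by ring
  have key : ∀ i j : Fin n, x i * ((∫ τ in a..b, w τ * (Φf τ i * Φf τ j)) * x j)
      = ∫ τ in a..b, x i * (w τ * (Φf τ i * Φf τ j) * x j) := by
    intro i j
    rw [← intervalIntegral.integral_mul_const, ← intervalIntegral.integral_const_mul]
  have expand : dotProduct x ((Matrix.of
        (fun i j => ∫ τ in a..b, w τ * (Φf τ i * Φf τ j))) *ᵥ x)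
      = ∑ i, ∑ j, x i * ((∫ τ in a..b, w τ * (Φf τ i * Φf τ j)) * x j) := by
    simp [dotProduct, mulVec, Finset.mul_sum]
  rw [expand]
  simp only [key]
  have hsum1 : ∀ i : Fin n,
      (∑ j, ∫ τ in a..b, x i * (w τ * (Φf τ i * Φf τ j) * x j))
        = ∫ τ in a..b, ∑ j, x i * (w τ * (Φf τ i * Φf τ j) * x j) :=
    fun i => (intervalIntegral.integral_finset_sum fun j _ => hci i j).symm
  simp only [hsum1]
  have hint2 : ∀ i ∈ Finset.univ, IntervalIntegrable
      (fun τ => ∑ j, x i * (w τ * (Φf τ i * Φf τ j) * x j)) volume a b := fun i _ =>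
    (continuous_finset_sum _ fun j _ => continuous_const.mul
      ((hw.mul ((hcont i).mul (hcont j))).mul continuous_const)).intervalIntegrable a b
  rw [← intervalIntegral.integral_finset_sum hint2]
  exact intervalIntegral.integral_congr fun τ _ => (hpt τ).symm

/-- Proposition 2: the exponentially-weighted information matrix
`φ(t) = ∫_{t_r}^t e^{-l(t-τ)} Φ_f Φ_fᵀ dτ` of a regressor that is FE over
`[t_r, t_e]` with level `α` satisfies `φ(t_e) ≥ e^{-l(t_e-t_r)} α I` in the Loewner
order, and hence `ω(t_e) = det φ(t_e) ≥ (e^{-l(t_e-t_r)} α)ⁿ > 0`. -/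
theorem drem_regressor_lower_bound {n : ℕ} (Φf : ℝ → Fin n → ℝ) (tr te l α : ℝ)
    (hΦc : Continuous Φf) (hl : 0 < l) (hα : 0 < α) (hrte : tr ≤ te)
    (hFE : (Matrix.of (fun i j => ∫ τ in tr..te, Φf τ i * Φf τ j) -
      α • (1 : Matrix (Fin n) (Fin n) ℝ)).PosSemidef) :
    letI φ : ℝ → Matrix (Fin n) (Fin n) ℝ :=
      fun t => Matrix.of (fun i j => ∫ τ in tr..t, Real.exp (-l * (t - τ)) * (Φf τ i * Φf τ j))
    ((φ te - (Real.exp (-l * (te - tr)) * α) • (1 : Matrix (Fin n) (Fin n) ℝ)).PosSemidef ∧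
      (Real.exp (-l * (te - tr)) * α) ^ n ≤ (φ te).det ∧
      0 < (Real.exp (-l * (te - tr)) * α) ^ n) := by
  set c : ℝ := Real.exp (-l * (te - tr)) * α with hc
  have hcpos : 0 < c := mul_pos (Real.exp_pos _) hα
  set w : ℝ → ℝ := fun τ => Real.exp (-l * (te - τ)) with hw
  have hwc : Continuous w := by
    apply Real.continuous_exp.comp
    exact (continuous_const.mul (continuous_const.sub continuous_id))
  set A : Matrix (Fin n) (Fin n) ℝ :=
    Matrix.of (fun i j => ∫ τ in tr..te, w τ * (Φf τ i * Φf τ j)) with hA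
  have hcont : ∀ i, Continuous fun τ => Φf τ i := fun i => (continuous_apply i).comp hΦc
  -- Hermitian
  have hherm : A.IsHermitian := by
    unfold Matrix.IsHermitian
    ext i j
    simp only [conjTranspose_apply, hA, Matrix.of_apply, star_trivial]
    exact intervalIntegral.integral_congr fun τ _ => by ring
  -- FE rewritten with weight 1
  have hFE' : ∀ x : Fin n → ℝ,
      α * dotProduct x x ≤ ∫ τ in tr..te, (∑ i, Φf τ i * x i) ^ 2 := by
    intro x
    have h2 := hFE.dotProduct_mulVec_nonneg x
    have hMeq : (Matrix.of (fun i j => ∫ τ in tr..te, Φf τ i * Φf τ j))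
        = Matrix.of (fun i j => ∫ τ in tr..te, (fun _ : ℝ => (1:ℝ)) τ * (Φf τ i * Φf τ j)) := by
      ext i j; simp
    rw [sub_mulVec, dotProduct_sub, star_trivial] at h2
    rw [show ((α • (1 : Matrix (Fin n) (Fin n) ℝ)) *ᵥ x) = α • x by
      rw [smul_mulVec, one_mulVec]] at h2
    rw [hMeq, quad_eq Φf hΦc _ continuous_const tr te x] at h2
    simp only [dotProduct_smul, smul_eq_mul] at h2
    simp only [one_mul] at h2
    linarith
  -- quadratic form bound for A
  have hquadA : ∀ x : Fin n → ℝ,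
      c * dotProduct x x ≤ dotProduct x (A *ᵥ x) := by
    intro x
    rw [hA, quad_eq Φf hΦc w hwc tr te x]
    have hmono : Real.exp (-l * (te - tr)) * (∫ τ in tr..te, (∑ i, Φf τ i * x i) ^ 2)
        ≤ ∫ τ in tr..te, w τ * (∑ i, Φf τ i * x i) ^ 2 := by
      rw [← intervalIntegral.integral_const_mul]
      apply intervalIntegral.integral_mono_on hrte
      · exact (continuous_const.mul
          ((continuous_finset_sum _ fun i _ => (hcont i).mul continuous_const).pow 2)).intervalIntegrable tr te
      · exact (hwc.mul
          ((continuous_finset_sum _ fun i _ => (hcont i).mul continuous_const).pow 2)).intervalIntegrable tr te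
      · intro τ hτ
        apply mul_le_mul_of_nonneg_right _ (sq_nonneg _)
        apply Real.exp_le_exp.2
        nlinarith [hτ.1, hl.le]
    calc c * dotProduct x x = Real.exp (-l * (te - tr)) * (α * dotProduct x x) := by
          rw [hc]; ring
      _ ≤ Real.exp (-l * (te - tr)) * ∫ τ in tr..te, (∑ i, Φf τ i * x i) ^ 2 :=
          mul_le_mul_of_nonneg_left (hFE' x) (Real.exp_pos _).le
      _ ≤ _ := hmono
  have hpsd : (A - c • (1 : Matrix (Fin n) (Fin n) ℝ)).PosSemidef := by
    refine posSemidef_iff_dotProduct_mulVec.mpr ⟨?_, ?_⟩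
    · have h2 : (c • (1 : Matrix (Fin n) (Fin n) ℝ)).IsHermitian := by
        unfold Matrix.IsHermitian; simp
      exact hherm.sub h2
    · intro x
      rw [sub_mulVec, dotProduct_sub, star_trivial]
      rw [show ((c • (1 : Matrix (Fin n) (Fin n) ℝ)) *ᵥ x) = c • x by
        rw [smul_mulVec, one_mulVec]]
      simp only [dotProduct_smul, smul_eq_mul]
      linarith [hquadA x]
  refine ⟨hpsd, det_lower_bound hcpos hpsd, pow_pos hcpos n⟩
end

section
/- Let ξ = (e, θ̃) ∈ ℝⁿ × ℝᵖ evolve under e'(t) = A_ref·e(t) + b·θ̃(t)ᵀφ(t), θ̃'(t) = −γ₂Ω(t)²θ̃(t) − γ₁φ(t)(bᵀPe(t)) where A_refᵀP + PA_ref = −Q (P,Q ≻ 0), γ₁, γ₂ > 0, φ bounded, and Ω(t) ≥ Ω_LB > 0 for all t ≥ t_e. Then with V(ξ) = eᵀPe + γ₁⁻¹‖θ̃‖², V'(t) ≤ −eᵀQe − 2γ₁⁻¹γ₂Ω(t)²‖θ̃‖² ≤ −κV(t) for κ = min{λ_min(Q)/λ_max(P), 2γ₂Ω_LB²}, hence ‖ξ(t)‖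 ≤ ρ‖ξ(t_e)‖e^{−κ(t−t_e)/2} for some ρ > 0. -/
open Matrix

theorem dot_self_nonneg' {m : ℕ} (x : Fin m → ℝ) : 0 ≤ x ⬝ᵥ x :=
  Finset.sum_nonneg fun i _ => mul_self_nonneg (x i)

theorem rayleigh_bounds {n : ℕ} (M : Matrix (Fin n) (Fin n) ℝ) (hM : M.IsHermitian)
    (x : Fin n → ℝ) :
    (⨅ i, hM.eigenvalues i) * (x ⬝ᵥ x) ≤ x ⬝ᵥ (M *ᵥ x) ∧
      x ⬝ᵥ (M *ᵥ x) ≤ (⨆ i, hM.eigenvalues i) * (x ⬝ᵥ x) := by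
  set U : Matrix (Fin n) (Fin n) ℝ := (hM.eigenvectorUnitary : Matrix (Fin n) (Fin n) ℝ) with hU
  set y := star U *ᵥ x with hy
  have hquad : x ⬝ᵥ (M *ᵥ x) = ∑ i, hM.eigenvalues i * (y i)^2 := by
    conv_lhs => rw [hM.spectral_theorem, Unitary.conjStarAlgAut_apply]
    rw [← mulVec_mulVec, ← mulVec_mulVec, dotProduct_mulVec,
      show x ᵥ* U = star U *ᵥ x by
        rw [Matrix.star_eq_conjTranspose, conjTranspose_eq_transpose_of_trivial, mulVec_transpose]]
    simp only [dotProduct, mulVec_diagonal, Function.comp_apply, RCLike.ofReal_real_eq_id, id, hy]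
    exact Finset.sum_congr rfl fun i _ => by ring
  have hsq : x ⬝ᵥ x = ∑ i, (y i)^2 := by
    have h1 : U * star U = 1 := (Matrix.mem_unitaryGroup_iff).mp (hM.eigenvectorUnitary).2
    have h2 : star U *ᵥ x = x ᵥ* U := by
      rw [Matrix.star_eq_conjTranspose, conjTranspose_eq_transpose_of_trivial, mulVec_transpose]
    have h3 : ∑ i, (y i)^2 = y ⬝ᵥ y := by simp [dotProduct, sq]
    rw [h3, hy, dotProduct_mulVec, h2, vecMul_vecMul, h1, vecMul_one]
  have hbb : BddBelow (Set.range hM.eigenvalues) := (Set.finite_range _).bddBelow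
  have hba : BddAbove (Set.range hM.eigenvalues) := (Set.finite_range _).bddAbove
  constructor
  · rw [hquad, hsq, Finset.mul_sum]
    exact Finset.sum_le_sum fun i _ =>
      mul_le_mul_of_nonneg_right (ciInf_le hbb i) (sq_nonneg _)
  · rw [hquad, hsq, Finset.mul_sum]
    exact Finset.sum_le_sum fun i _ =>
      mul_le_mul_of_nonneg_right (le_ciSup hba i) (sq_nonneg _)

theorem hasDerivAt_dot {m : ℕ} {f g : ℝ → Fin m → ℝ} {f' g' : Fin m → ℝ} {t : ℝ}
    (hf : HasDerivAt f f' t) (hg : HasDerivAt g g' t) :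
    HasDerivAt (fun s => f s ⬝ᵥ g s) (f' ⬝ᵥ g t + f t ⬝ᵥ g') t := by
  have hfi := hasDerivAt_pi.mp hf
  have hgi := hasDerivAt_pi.mp hg
  have : HasDerivAt (fun s => ∑ i, f s i * g s i)
      (∑ i, (f' i * g t i + f t i * g' i)) t :=
    HasDerivAt.fun_sum fun i _ => (hfi i).mul (hgi i)
  simpa [dotProduct, Finset.sum_add_distrib] using this

theorem hasDerivAt_mulVec {m : ℕ} {f : ℝ → Fin m → ℝ} {f' : Fin m → ℝ} {t : ℝ}
    (M : Matrix (Fin m) (Fin m) ℝ) (hf : HasDerivAt f f' t) :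
    HasDerivAt (fun s => M *ᵥ f s) (M *ᵥ f') t := by
  have hfi := hasDerivAt_pi.mp hf
  apply hasDerivAt_pi.mpr
  intro i
  have : HasDerivAt (fun s => ∑ j, M i j * f s j) (∑ j, M i j * f' j) t :=
    HasDerivAt.fun_sum fun j _ => (hfi j).const_mul (M i j)
  simpa [mulVec, dotProduct] using this

theorem mulVec_dot' {n : ℕ} (M : Matrix (Fin n) (Fin n) ℝ) (a c : Fin n → ℝ) :
    (M *ᵥ a) ⬝ᵥ c = a ⬝ᵥ (M.transpose *ᵥ c) := by
  rw [dotProduct_comm, dotProduct_mulVec, ← mulVec_transpose, dotProduct_comm]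

theorem deriv_algebra {n p : ℕ} (Aref P Q : Matrix (Fin n) (Fin n) ℝ) (b u : Fin n → ℝ)
    (hPt : P.transpose = P)
    (hLyap : Aref.transpose * P + P * Aref = -Q)
    (v w : Fin p → ℝ) (γ1 γ2 ω : ℝ) (hγ1 : γ1 ≠ 0) :
    (Aref *ᵥ u + (v ⬝ᵥ w) • b) ⬝ᵥ (P *ᵥ u)
      + u ⬝ᵥ (P *ᵥ (Aref *ᵥ u + (v ⬝ᵥ w) • b))
      + γ1⁻¹ * ((-(γ2 * ω ^ 2) • v - (γ1 * (b ⬝ᵥ (P *ᵥ u))) • w) ⬝ᵥ v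
        + v ⬝ᵥ (-(γ2 * ω ^ 2) • v - (γ1 * (b ⬝ᵥ (P *ᵥ u))) • w))
      = -(u ⬝ᵥ (Q *ᵥ u)) - 2 * γ1⁻¹ * γ2 * ω ^ 2 * (v ⬝ᵥ v) := by
  have h1 : (Aref *ᵥ u) ⬝ᵥ (P *ᵥ u) = u ⬝ᵥ ((Aref.transpose * P) *ᵥ u) := by
    rw [mulVec_dot', mulVec_mulVec]
  have h2 : u ⬝ᵥ (P *ᵥ (Aref *ᵥ u)) = u ⬝ᵥ ((P * Aref) *ᵥ u) := by
    rw [mulVec_mulVec]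
  have h3 : u ⬝ᵥ (P *ᵥ b) = b ⬝ᵥ (P *ᵥ u) := by
    rw [dotProduct_comm, mulVec_dot', hPt]
  have h4 : u ⬝ᵥ ((Aref.transpose * P) *ᵥ u) + u ⬝ᵥ ((P * Aref) *ᵥ u)
      = -(u ⬝ᵥ (Q *ᵥ u)) := by
    rw [← dotProduct_add, ← add_mulVec, hLyap, neg_mulVec, dotProduct_neg]
  have h5 : w ⬝ᵥ v = v ⬝ᵥ w := dotProduct_comm w v
  simp only [add_dotProduct, dotProduct_add, mulVec_add, mulVec_smul, smul_dotProduct,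
    dotProduct_smul, sub_dotProduct, dotProduct_sub, smul_eq_mul, neg_mul]
  rw [h1, h2, h3, h5]
  field_simp
  linear_combination γ1 * h4

/-- Theorem 1 (single-input composite MRAC after the excitation interval): under the
composite adaptive law the Lyapunov function `V = eᵀPe + γ₁⁻¹‖θ̃‖²` satisfies
`V' ≤ -eᵀQe - 2γ₁⁻¹γ₂Ω²‖θ̃‖² ≤ -κV` with
`κ = min{λ_min(Q)/λ_max(P), 2γ₂Ω_LB²}`, hence the augmented error
`ξ = (e, θ̃)` decays exponentially: `‖ξ(t)‖ ≤ ρ‖ξ(t_e)‖e^{-κ(t-t_e)/2}`. -/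
theorem composite_mrac_ges {n p : ℕ} (hn : 0 < n)
    (Aref : Matrix (Fin n) (Fin n) ℝ) (b : Fin n → ℝ)
    (P Q : Matrix (Fin n) (Fin n) ℝ) (hP : P.PosDef) (hQ : Q.PosDef)
    (hLyap : Aref.transpose * P + P * Aref = -Q)
    (e : ℝ → Fin n → ℝ) (θ : ℝ → Fin p → ℝ) (φ : ℝ → Fin p → ℝ) (Ω : ℝ → ℝ)
    (γ1 γ2 te ΩLB : ℝ) (hγ1 : 0 < γ1) (hγ2 : 0 < γ2) (hΩLB : 0 < ΩLB)
    (hφb : ∃ C, ∀ t, ‖φ t‖ ≤ C) (hΩc : Continuous Ω)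
    (hΩ : ∀ t ≥ te, ΩLB ≤ Ω t)
    (he : ∀ t, HasDerivAt e (Aref *ᵥ e t + (θ t ⬝ᵥ φ t) • b) t)
    (hθ : ∀ t, HasDerivAt θ
      (-(γ2 * (Ω t) ^ 2) • θ t - (γ1 * (b ⬝ᵥ (P *ᵥ e t))) • φ t) t) :
    letI V : ℝ → ℝ := fun t => e t ⬝ᵥ (P *ᵥ e t) + γ1⁻¹ * (θ t ⬝ᵥ θ t)
    letI κ : ℝ := min ((⨅ i, hQ.1.eigenvalues i) / (⨆ i, hP.1.eigenvalues i))
      (2 * γ2 * ΩLB ^ 2)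
    (∀ t ≥ te, deriv V t ≤
        -(e t ⬝ᵥ (Q *ᵥ e t)) - 2 * γ1⁻¹ * γ2 * (Ω t) ^ 2 * (θ t ⬝ᵥ θ t) ∧
      deriv V t ≤ -κ * V t) ∧
    ∃ ρ : ℝ, 0 < ρ ∧ ∀ t ≥ te,
      Real.sqrt (e t ⬝ᵥ e t + θ t ⬝ᵥ θ t) ≤
        ρ * Real.sqrt (e te ⬝ᵥ e te + θ te ⬝ᵥ θ te) * Real.exp (-(κ / 2) * (t - te)) := by
  have hne : Nonempty (Fin n) := ⟨⟨0, hn⟩⟩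
  set V : ℝ → ℝ := fun t => e t ⬝ᵥ (P *ᵥ e t) + γ1⁻¹ * (θ t ⬝ᵥ θ t) with hVdef
  set κ : ℝ := ((⨅ i, hQ.1.eigenvalues i) / (⨆ i, hP.1.eigenvalues i)) ⊓ (2 * γ2 * ΩLB ^ 2)
    with hκdef
  have hPt : P.transpose = P := by
    have := hP.1
    rwa [Matrix.IsHermitian, conjTranspose_eq_transpose_of_trivial] at this
  set D : ℝ → ℝ :=
    fun t => -(e t ⬝ᵥ (Q *ᵥ e t)) - 2 * γ1⁻¹ * γ2 * (Ω t) ^ 2 * (θ t ⬝ᵥ θ t) with hD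
  have hV : ∀ t, HasDerivAt V (D t) t := by
    intro t
    have h := (hasDerivAt_dot (he t) (hasDerivAt_mulVec P (he t))).add
      ((hasDerivAt_dot (hθ t) (hθ t)).const_mul γ1⁻¹)
    have halg := deriv_algebra Aref P Q b (e t) hPt hLyap (θ t) (φ t) γ1 γ2 (Ω t)
      (ne_of_gt hγ1)
    rw [halg] at h
    exact h
  -- eigenvalue quantities
  set lQm := ⨅ i, hQ.1.eigenvalues i with hlQm
  set lPM := ⨆ i, hP.1.eigenvalues i with hlPM
  set lPm := ⨅ i, hP.1.eigenvalues i with hlPm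
  have hbbP : BddBelow (Set.range hP.1.eigenvalues) := (Set.finite_range _).bddBelow
  have hbaP : BddAbove (Set.range hP.1.eigenvalues) := (Set.finite_range _).bddAbove
  have hbbQ : BddBelow (Set.range hQ.1.eigenvalues) := (Set.finite_range _).bddBelow
  have hlPMpos : 0 < lPM :=
    lt_of_lt_of_le (hP.eigenvalues_pos (Classical.arbitrary (Fin n))) (le_ciSup hbaP _)
  have hlQmpos : 0 < lQm := by
    obtain ⟨i, hi⟩ := exists_eq_ciInf_of_finite (f := hQ.1.eigenvalues)
    rw [hlQm, ← hi]; exact hQ.eigenvalues_pos i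
  have hlPmpos : 0 < lPm := by
    obtain ⟨i, hi⟩ := exists_eq_ciInf_of_finite (f := hP.1.eigenvalues)
    rw [hlPm, ← hi]; exact hP.eigenvalues_pos i
  have hκ1 : κ ≤ lQm / lPM := by rw [hκdef]; exact inf_le_left
  have hκ2 : κ ≤ 2 * γ2 * ΩLB ^ 2 := by rw [hκdef]; exact inf_le_right
  have mainIneq : ∀ t ≥ te, D t ≤ -κ * V t := by
    intro t ht
    have rQ := (rayleigh_bounds Q hQ.1 (e t)).1
    have rPu := (rayleigh_bounds P hP.1 (e t)).2
    have rPl := (rayleigh_bounds P hP.1 (e t)).1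
    rw [← hlQm] at rQ
    rw [← hlPM] at rPu
    rw [← hlPm] at rPl
    have hee := dot_self_nonneg' (e t)
    have hθθ := dot_self_nonneg' (θ t)
    have hΩt := hΩ t ht
    have hΩ2 : ΩLB ^ 2 ≤ (Ω t) ^ 2 := by nlinarith
    have hPe : 0 ≤ e t ⬝ᵥ (P *ᵥ e t) :=
      le_trans (mul_nonneg hlPmpos.le hee) rPl
    have k1 : κ * (e t ⬝ᵥ (P *ᵥ e t)) ≤ e t ⬝ᵥ (Q *ᵥ e t) := by
      have h1 : κ * (e t ⬝ᵥ (P *ᵥ e t)) ≤ (lQm / lPM) * (e t ⬝ᵥ (P *ᵥ e t)) :=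
        mul_le_mul_of_nonneg_right hκ1 hPe
      have h2 : (lQm / lPM) * (e t ⬝ᵥ (P *ᵥ e t)) ≤ (lQm / lPM) * (lPM * (e t ⬝ᵥ e t)) :=
        mul_le_mul_of_nonneg_left rPu (div_nonneg hlQmpos.le hlPMpos.le)
      have h3 : (lQm / lPM) * (lPM * (e t ⬝ᵥ e t)) = lQm * (e t ⬝ᵥ e t) := by
        field_simp
      linarith
    have k2 : κ * (γ1⁻¹ * (θ t ⬝ᵥ θ t)) ≤ 2 * γ1⁻¹ * γ2 * (Ω t) ^ 2 * (θ t ⬝ᵥ θ t) := by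
      have hκ3 : κ ≤ 2 * γ2 * (Ω t) ^ 2 := by nlinarith
      have hnn : 0 ≤ γ1⁻¹ * (θ t ⬝ᵥ θ t) := mul_nonneg (inv_nonneg.mpr hγ1.le) hθθ
      calc κ * (γ1⁻¹ * (θ t ⬝ᵥ θ t)) ≤ (2 * γ2 * (Ω t) ^ 2) * (γ1⁻¹ * (θ t ⬝ᵥ θ t)) :=
            mul_le_mul_of_nonneg_right hκ3 hnn
        _ = 2 * γ1⁻¹ * γ2 * (Ω t) ^ 2 * (θ t ⬝ᵥ θ t) := by ring
    show D t ≤ -κ * (e t ⬝ᵥ (P *ᵥ e t) + γ1⁻¹ * (θ t ⬝ᵥ θ t))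
    rw [hD]
    linarith
  constructor
  · intro t ht
    rw [(hV t).deriv]
    exact ⟨le_refl _, mainIneq t ht⟩
  · -- Grönwall
    have hVmono : ∀ t ≥ te, V t * Real.exp (κ * (t - te)) ≤ V te := by
      set W : ℝ → ℝ := fun s => V s * Real.exp (κ * (s - te)) with hWdef
      have hW : ∀ s, HasDerivAt W ((D s + κ * V s) * Real.exp (κ * (s - te))) s := by
        intro s
        have h1 : HasDerivAt (fun s => κ * (s - te)) κ s := by
          simpa using ((hasDerivAt_id s).sub_const te).const_mul κ
        have hexp : HasDerivAt (fun s => Real.exp (κ * (s - te)))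
            (Real.exp (κ * (s - te)) * κ) s := h1.exp
        have := (hV s).fun_mul hexp
        rw [hWdef]
        exact this.congr_deriv (by ring)
      have hanti : AntitoneOn W (Set.Ici te) := by
        apply antitoneOn_of_deriv_nonpos (convex_Ici te)
        · exact fun s _ => (hW s).continuousAt.continuousWithinAt
        · exact fun s _ => (hW s).differentiableAt.differentiableWithinAt
        · intro s hs
          rw [interior_Ici] at hs
          rw [(hW s).deriv]
          have h0 : D s + κ * V s ≤ 0 := by
            have := mainIneq s (le_of_lt hs)
            linarith
          exact mul_nonpos_of_nonpos_of_nonneg h0 (Real.exp_nonneg _)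
      intro t ht
      have := hanti Set.self_mem_Ici ht ht
      simpa [hWdef] using this
    have hVdecay : ∀ t ≥ te, V t ≤ V te * Real.exp (-κ * (t - te)) := by
      intro t ht
      have h := mul_le_mul_of_nonneg_right (hVmono t ht) (Real.exp_nonneg (-κ * (t - te)))
      have hmul : Real.exp (κ * (t - te)) * Real.exp (-κ * (t - te)) = 1 := by
        rw [← Real.exp_add]; ring_nf; exact Real.exp_zero
      calc V t = V t * (Real.exp (κ * (t - te)) * Real.exp (-κ * (t - te))) := by
            rw [hmul, mul_one]
        _ = V t * Real.exp (κ * (t - te)) * Real.exp (-κ * (t - te)) := by ring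
        _ ≤ V te * Real.exp (-κ * (t - te)) := h
    set c1 := min lPm γ1⁻¹ with hc1def
    set c2 := max lPM γ1⁻¹ with hc2def
    have hγ1inv : 0 < γ1⁻¹ := inv_pos.mpr hγ1
    have hc1 : 0 < c1 := lt_min hlPmpos hγ1inv
    have hc2 : 0 < c2 := lt_of_lt_of_le hγ1inv (le_max_right _ _)
    refine ⟨Real.sqrt (c2 / c1), Real.sqrt_pos.mpr (div_pos hc2 hc1), ?_⟩
    intro t ht
    have hSt := dot_self_nonneg' (e t)
    have hSθ := dot_self_nonneg' (θ t)
    have hSte := dot_self_nonneg' (e te)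
    have hSθe := dot_self_nonneg' (θ te)
    have hlow : c1 * (e t ⬝ᵥ e t + θ t ⬝ᵥ θ t) ≤ V t := by
      have r1 := (rayleigh_bounds P hP.1 (e t)).1
      have a1 : c1 * (e t ⬝ᵥ e t) ≤ lPm * (e t ⬝ᵥ e t) :=
        mul_le_mul_of_nonneg_right (min_le_left _ _) hSt
      have a2 : c1 * (θ t ⬝ᵥ θ t) ≤ γ1⁻¹ * (θ t ⬝ᵥ θ t) :=
        mul_le_mul_of_nonneg_right (min_le_right _ _) hSθ
      show c1 * (e t ⬝ᵥ e t + θ t ⬝ᵥ θ t) ≤ e t ⬝ᵥ (P *ᵥ e t) + γ1⁻¹ * (θ t ⬝ᵥ θ t)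
      nlinarith
    have hupp : V te ≤ c2 * (e te ⬝ᵥ e te + θ te ⬝ᵥ θ te) := by
      have r2 := (rayleigh_bounds P hP.1 (e te)).2
      have a1 : lPM * (e te ⬝ᵥ e te) ≤ c2 * (e te ⬝ᵥ e te) :=
        mul_le_mul_of_nonneg_right (le_max_left _ _) hSte
      have a2 : γ1⁻¹ * (θ te ⬝ᵥ θ te) ≤ c2 * (θ te ⬝ᵥ θ te) :=
        mul_le_mul_of_nonneg_right (le_max_right _ _) hSθe
      show e te ⬝ᵥ (P *ᵥ e te) + γ1⁻¹ * (θ te ⬝ᵥ θ te) ≤ c2 * (e te ⬝ᵥ e te + θ te ⬝ᵥ θ te)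
      nlinarith
    have hchain : e t ⬝ᵥ e t + θ t ⬝ᵥ θ t ≤
        (c2 / c1) * (e te ⬝ᵥ e te + θ te ⬝ᵥ θ te) * Real.exp (-κ * (t - te)) := by
      have h1 := hVdecay t ht
      have h2 : V te * Real.exp (-κ * (t - te)) ≤
          c2 * (e te ⬝ᵥ e te + θ te ⬝ᵥ θ te) * Real.exp (-κ * (t - te)) :=
        mul_le_mul_of_nonneg_right hupp (Real.exp_nonneg _)
      rw [div_mul_eq_mul_div, div_mul_eq_mul_div, le_div_iff₀ hc1]
      linarith [h1, h2, hlow]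
    have hsq := Real.sqrt_le_sqrt hchain
    have hexpsq : Real.exp (-κ * (t - te)) = (Real.exp (-(κ / 2) * (t - te))) ^ 2 := by
      rw [sq, ← Real.exp_add]; ring_nf
    calc Real.sqrt (e t ⬝ᵥ e t + θ t ⬝ᵥ θ t)
        ≤ Real.sqrt ((c2 / c1) * (e te ⬝ᵥ e te + θ te ⬝ᵥ θ te) * Real.exp (-κ * (t - te))) :=
          hsq
      _ = Real.sqrt (c2 / c1) * Real.sqrt (e te ⬝ᵥ e te + θ te ⬝ᵥ θ te) *
          Real.exp (-(κ / 2) * (t - te)) := by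
          rw [Real.sqrt_mul (by positivity), Real.sqrt_mul (div_nonneg hc2.le hc1.le),
            hexpsq, Real.sqrt_sq (Real.exp_nonneg _)]
end

section
/- Suppose θ̃ satisfies θ̃'(t) = −γΩ(t)²θ̃(t) + γΩ(t)·d(t) for t ≥ t_e, where 0 < Ω_LB ≤ Ω(t) ≤ Ω_UB and |d(t)| ≤ D for all t ≥ t_e. Then |θ̃(t)| ≤ |θ̃(t_e)|e^{−γΩ_LB²(t−t_e)} + (Ω_UB·D)/(Ω_LB²), so θ̃ is exponentially ultimately bounded with ultimate bound Ω_UB·D/Ω_LB². -/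
open intervalIntegral Real

set_option maxHeartbeats 1000000 in
/-- Theorems 2–3 (exponential ultimate boundedness): if the parameter error obeys the
perturbed dynamics `θ̃' = -γΩ²θ̃ + γΩd` for `t ≥ t_e` with `0 < Ω_LB ≤ Ω ≤ Ω_UB` and
`|d| ≤ D`, then `|θ̃(t)| ≤ |θ̃(t_e)|e^{-γΩ_LB²(t-t_e)} + Ω_UB D / Ω_LB²`, so `θ̃` is
exponentially ultimately bounded with ultimate bound `Ω_UB D / Ω_LB²`. -/
theorem drem_eub_perturbed (θt Ω d : ℝ → ℝ) (te γ ΩLB ΩUB D : ℝ)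
    (hγ : 0 < γ) (hΩLB : 0 < ΩLB) (hΩc : Continuous Ω) (hdc : Continuous d)
    (hΩ : ∀ t ≥ te, ΩLB ≤ Ω t ∧ Ω t ≤ ΩUB) (hd : ∀ t ≥ te, |d t| ≤ D)
    (hode : ∀ t ≥ te, HasDerivAt θt (-γ * (Ω t) ^ 2 * θt t + γ * Ω t * d t) t) :
    ∀ t ≥ te, |θt t| ≤ |θt te| * Real.exp (-γ * ΩLB ^ 2 * (t - te)) + ΩUB * D / ΩLB ^ 2 := by
  intro t ht
  set c : ℝ := γ * ΩLB ^ 2 with hc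
  have hcpos : 0 < c := by positivity
  have hD : 0 ≤ D := le_trans (abs_nonneg _) (hd te le_rfl)
  have hUB : ΩLB ≤ ΩUB := le_trans (hΩ te le_rfl).1 (hΩ te le_rfl).2
  have hΩUBpos : 0 < ΩUB := lt_of_lt_of_le hΩLB hUB
  have hg : Continuous (fun s : ℝ => γ * Ω s ^ 2) := by continuity
  set I : ℝ → ℝ := fun s => ∫ u in te..s, γ * Ω u ^ 2 with hI
  have hI' : ∀ s : ℝ, HasDerivAt I (γ * Ω s ^ 2) s := fun s =>
    intervalIntegral.integral_hasDerivAt_right (hg.intervalIntegrable _ _)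
      (hg.stronglyMeasurableAtFilter _ _) hg.continuousAt
  -- lower bound on integrals of γΩ² over segments in [te, ∞)
  have hseg : ∀ a b : ℝ, te ≤ a → a ≤ b → c * (b - a) ≤ ∫ x in a..b, γ * Ω x ^ 2 := by
    intro a b hta hab
    have hmono : (∫ x in a..b, c) ≤ ∫ x in a..b, γ * Ω x ^ 2 := by
      apply intervalIntegral.integral_mono_on hab intervalIntegrable_const
        (hg.intervalIntegrable _ _)
      intro x hx
      have hx1 : ΩLB ≤ Ω x := (hΩ x (le_trans hta hx.1)).1
      have : ΩLB ^ 2 ≤ Ω x ^ 2 := pow_le_pow_left₀ hΩLB.le hx1 2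
      rw [hc]
      nlinarith
    rw [intervalIntegral.integral_const, smul_eq_mul] at hmono
    nlinarith [hmono]
  -- u = θ * exp I  solves  u' = γ Ω d exp I
  set u : ℝ → ℝ := fun s => θt s * Real.exp (I s) with hu
  have hu' : ∀ s ∈ Set.uIcc te t, HasDerivAt u (γ * Ω s * d s * Real.exp (I s)) s := by
    intro s hs
    rw [Set.uIcc_of_le ht] at hs
    have h1 : HasDerivAt (fun s => θt s * Real.exp (I s)) _ s := (hode s hs.1).mul ((hI' s).exp)
    convert h1 using 1
    ring
  have hJc : Continuous fun s : ℝ => γ * Ω s * d s * Real.exp (I s) := by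
    have hIc : Continuous I := (Differentiable.continuous (fun s => (hI' s).differentiableAt))
    continuity
  have key : u t - u te = ∫ s in te..t, γ * Ω s * d s * Real.exp (I s) :=
    (intervalIntegral.integral_eq_sub_of_hasDerivAt hu' (hJc.intervalIntegrable _ _)).symm
  have hIte : I te = 0 := by simp [hI]
  set J : ℝ := ∫ s in te..t, γ * Ω s * d s * Real.exp (I s) with hJ
  have hθt : θt t = (θt te + J) * Real.exp (-I t) := by
    have hne : Real.exp (I t) ≠ 0 := (Real.exp_pos _).ne'
    have : θt t * Real.exp (I t) = θt te + J := by
      simp only [hu, hIte, Real.exp_zero, mul_one] at key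
      linarith
    rw [Real.exp_neg]
    field_simp
    linarith [this]
  -- term 1 : exp(-I t) ≤ exp(-c (t - te))
  have hIt : c * (t - te) ≤ I t := hseg te t le_rfl ht
  have hexp1 : Real.exp (-I t) ≤ Real.exp (-γ * ΩLB ^ 2 * (t - te)) := by
    apply Real.exp_le_exp.mpr
    rw [hc] at hIt
    linarith
  -- term 2 : |J| * exp (-I t) ≤ ΩUB D / ΩLB²
  have habs : |J| ≤ ∫ s in te..t, |γ * Ω s * d s * Real.exp (I s)| :=
    intervalIntegral.abs_integral_le_integral_abs ht
  have hpt : ∀ s ∈ Set.Icc te t,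
      |γ * Ω s * d s * Real.exp (I s)| * Real.exp (-I t)
        ≤ γ * ΩUB * D * Real.exp (c * (s - t)) := by
    intro s hs
    have hΩs := hΩ s hs.1
    have hds := hd s hs.1
    have hIst : c * (t - s) ≤ I t - I s := by
      have := hseg s t hs.1 hs.2
      have heq : I t - I s = ∫ x in s..t, γ * Ω x ^ 2 :=
        intervalIntegral.integral_interval_sub_left (hg.intervalIntegrable _ _)
          (hg.intervalIntegrable _ _)
      linarith [heq ▸ this]
    have h2 : Real.exp (I s) * Real.exp (-I t) ≤ Real.exp (c * (s - t)) := by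
      rw [← Real.exp_add]
      apply Real.exp_le_exp.mpr
      linarith
    have h1 : |γ * Ω s * d s| ≤ γ * ΩUB * D := by
      rw [abs_mul, abs_mul, abs_of_pos hγ, abs_of_pos (lt_of_lt_of_le hΩLB hΩs.1)]
      have := mul_le_mul hΩs.2 hds (abs_nonneg _) hΩUBpos.le
      nlinarith
    calc |γ * Ω s * d s * Real.exp (I s)| * Real.exp (-I t)
        = |γ * Ω s * d s| * (Real.exp (I s) * Real.exp (-I t)) := by
          rw [abs_mul, abs_of_pos (Real.exp_pos _)]; ring
      _ ≤ γ * ΩUB * D * Real.exp (c * (s - t)) :=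
          mul_le_mul h1 h2 (by positivity) (by positivity)
  have hcont1 : Continuous fun s : ℝ => |γ * Ω s * d s * Real.exp (I s)| * Real.exp (-I t) :=
    (hJc.abs).mul continuous_const
  have hcont2 : Continuous fun s : ℝ => γ * ΩUB * D * Real.exp (c * (s - t)) :=
    continuous_const.mul (Real.continuous_exp.comp
      (continuous_const.mul (continuous_id.sub continuous_const)))
  have hintle : (∫ s in te..t, |γ * Ω s * d s * Real.exp (I s)| * Real.exp (-I t))
      ≤ ∫ s in te..t, γ * ΩUB * D * Real.exp (c * (s - t)) :=
    intervalIntegral.integral_mono_on ht (hcont1.intervalIntegrable _ _)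
      (hcont2.intervalIntegrable _ _) hpt
  have hFTC : (∫ s in te..t, γ * ΩUB * D * Real.exp (c * (s - t)))
      = γ * ΩUB * D / c * (Real.exp (c * (t - t)) - Real.exp (c * (te - t))) := by
    have hF : ∀ s ∈ Set.uIcc te t,
        HasDerivAt (fun s => γ * ΩUB * D / c * Real.exp (c * (s - t)))
          (γ * ΩUB * D * Real.exp (c * (s - t))) s := by
      intro s _
      have h1 : HasDerivAt (fun s : ℝ => c * (s - t)) c s := by
        simpa using ((hasDerivAt_id s).sub_const t).const_mul c
      have : HasDerivAt (fun s => γ * ΩUB * D / c * Real.exp (c * (s - t))) _ s :=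
        (h1.exp).const_mul (γ * ΩUB * D / c)
      convert this using 1
      field_simp
    rw [intervalIntegral.integral_eq_sub_of_hasDerivAt hF (hcont2.intervalIntegrable _ _)]
    ring
  have hterm2 : |J| * Real.exp (-I t) ≤ ΩUB * D / ΩLB ^ 2 := by
    have e1 : |J| * Real.exp (-I t)
        ≤ ∫ s in te..t, |γ * Ω s * d s * Real.exp (I s)| * Real.exp (-I t) := by
      rw [intervalIntegral.integral_mul_const]
      exact mul_le_mul_of_nonneg_right habs (Real.exp_pos _).le
    have e2 : γ * ΩUB * D / c * (Real.exp (c * (t - t)) - Real.exp (c * (te - t)))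
        ≤ ΩUB * D / ΩLB ^ 2 := by
      have h3 : Real.exp (c * (t - t)) = 1 := by simp
      have h4 : 0 < Real.exp (c * (te - t)) := Real.exp_pos _
      have h5 : γ * ΩUB * D / c = ΩUB * D / ΩLB ^ 2 := by
        rw [hc]; field_simp
      rw [h3, h5]
      have h6 : 0 ≤ ΩUB * D / ΩLB ^ 2 := by positivity
      nlinarith [h4, h6]
    linarith [hintle, hFTC]
  -- combine
  rw [hθt, abs_mul, abs_of_pos (Real.exp_pos _)]
  calc |θt te + J| * Real.exp (-I t)
      ≤ (|θt te| + |J|) * Real.exp (-I t) :=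
        mul_le_mul_of_nonneg_right (abs_add_le _ _) (Real.exp_pos _).le
    _ = |θt te| * Real.exp (-I t) + |J| * Real.exp (-I t) := by ring
    _ ≤ |θt te| * Real.exp (-γ * ΩLB ^ 2 * (t - te)) + ΩUB * D / ΩLB ^ 2 :=
        add_le_add (mul_le_mul_of_nonneg_left hexp1 (abs_nonneg _)) hterm2
end
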